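/- arXiv:math/0402248 — 4 statements merged into one kernel-verified Lean document; each statement's English description precedes it below -/
import Mathlib

section
/- For every unital associative algebra A over ℝ, the Gerstenhaber bracket makes the graded vector space C^•(A) = ⊕_{k ≥ −1} C^k(A) into a graded Lie superalgebra: it is graded antisymmetric, [Φ₁,Φ₂]_G = −(−1)^{k₁k₂}[Φ₂,Φ₁]_G, and it satisfies the graded Jacobi identity (−1)^{k₁k₃}[[Φ₁,Φ₂]_G,Φ₃]_G + (−1)^{k₂k₁}[[Φ₂,Φ₃]_G,Φ₁]_G + (−1)^{k₃k₂}[[Φ₃,Φ₁]_G,Φ₂]_G = 0 for all Φᵢ ∈ C^{kᵢ}(A). -/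
open scoped BigOperators

/-- Evaluation of a Hochschild cochain with `m` arguments (an element of
`C^{m-1}(A) = Hom_ℝ(A^{⊗ m}, A)`, so that `m = k + 1` for a cochain of degree `k ≥ -1`)
on the first `m` entries of a sequence of elements of `A`. -/
def evalC {A : Type} [AddCommGroup A] [Module ℝ A] {m : ℕ}
    (Φ : MultilinearMap ℝ (fun _ : Fin m => A) A) (a : ℕ → A) : A :=
  Φ fun j => a j

/-- The Gerstenhaber "composition" `Φ₁ ∘ Φ₂` of raw cochains, where `Φ₁` has `m₁` arguments
(degree `m₁ - 1`) and `Φ₂` has `m₂` arguments (degree `m₂ - 1`):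
`∑_{i=0}^{k₁} (-1)^{i k₂} Φ₁(a₀, …, a_{i-1}, Φ₂(a_i, …, a_{i+k₂}), a_{i+k₂+1}, …)`. -/
noncomputable def gcompM {A : Type} [AddCommGroup A] [Module ℝ A] (m₁ m₂ : ℕ)
    (Φ₁ Φ₂ : (ℕ → A) → A) : (ℕ → A) → A := fun a =>
  ∑ i ∈ Finset.range m₁,
    ((-1 : ℝ) ^ ((i : ℤ) * ((m₂ : ℤ) - 1))) •
      Φ₁ fun j =>
        if j < i then a j else if j = i then Φ₂ (fun t => a (i + t)) else a (j + m₂ - 1)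

/-- The Gerstenhaber bracket `[Φ₁, Φ₂]_G = Φ₁ ∘ Φ₂ - (-1)^{k₁ k₂} Φ₂ ∘ Φ₁` of raw cochains,
where `Φᵢ` has `mᵢ = kᵢ + 1` arguments (degree `kᵢ`).  The result has `m₁ + m₂ - 1`
arguments (degree `k₁ + k₂`). -/
noncomputable def gbrM {A : Type} [AddCommGroup A] [Module ℝ A] (m₁ m₂ : ℕ)
    (Φ₁ Φ₂ : (ℕ → A) → A) : (ℕ → A) → A := fun a =>
  gcompM m₁ m₂ Φ₁ Φ₂ a -
    ((-1 : ℝ) ^ (((m₁ : ℤ) - 1) * ((m₂ : ℤ) - 1))) • gcompM m₂ m₁ Φ₂ Φ₁ a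

set_option linter.unusedSectionVars false
set_option linter.unusedVariables false
set_option linter.unreachableTactic false
set_option linter.unusedTactic false

namespace GerstAux

lemma sgn_add (p q : ℤ) : ((-1:ℝ))^(p+q) = (-1:ℝ)^p * (-1:ℝ)^q :=
  zpow_add₀ (by norm_num) p q

variable {A : Type} [AddCommGroup A] [Module ℝ A]

lemma ins_eq_update {m : ℕ} (i : ℕ) (hi : i < m) (b c : ℕ → A) (z : A) :
    (fun j : Fin m => if (j:ℕ) < i then b j else if (j:ℕ) = i then z else c j)
      = Function.update (fun j : Fin m => if (j:ℕ) < i then b j else c j) ⟨i, hi⟩ z := by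
  funext j
  rcases eq_or_ne ((j:ℕ)) i with h | h
  · have hj : j = (⟨i, hi⟩ : Fin m) := Fin.ext h
    subst hj
    simp
  · have hj : j ≠ (⟨i, hi⟩ : Fin m) := by simpa [Fin.ext_iff] using h
    simp [Function.update_of_ne hj, h]

lemma map_if_smul {m : ℕ} (Φ : MultilinearMap ℝ (fun _ : Fin m => A) A) {i : ℕ} (hi : i < m)
    (b c : ℕ → A) (r : ℝ) (x : A) :
    (Φ fun j : Fin m => if (j:ℕ) < i then b j else if (j:ℕ) = i then r • x else c j)
      = r • (Φ fun j : Fin m => if (j:ℕ) < i then b j else if (j:ℕ) = i then x else c j) := by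
  rw [ins_eq_update i hi b c, ins_eq_update i hi b c, Φ.map_update_smul]

lemma map_if_zero {m : ℕ} (Φ : MultilinearMap ℝ (fun _ : Fin m => A) A) {i : ℕ} (hi : i < m)
    (b c : ℕ → A) :
    (Φ fun j : Fin m => if (j:ℕ) < i then b j else if (j:ℕ) = i then (0:A) else c j) = 0 := by
  rw [ins_eq_update i hi b c, Φ.map_update_zero]

lemma map_if_sum {m : ℕ} (Φ : MultilinearMap ℝ (fun _ : Fin m => A) A) {i : ℕ} (hi : i < m)
    (b c : ℕ → A) {α : Type} (t : Finset α) (g : α → A) :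
    (Φ fun j : Fin m => if (j:ℕ) < i then b j else if (j:ℕ) = i then (∑ r ∈ t, g r) else c j)
      = ∑ r ∈ t, (Φ fun j : Fin m => if (j:ℕ) < i then b j else if (j:ℕ) = i then g r else c j) := by
  rw [ins_eq_update i hi b c, Φ.map_update_sum]
  exact Finset.sum_congr rfl fun r _ => by rw [ins_eq_update i hi b c]

def DependsOn {A : Type} [AddCommGroup A] [Module ℝ A] (m : ℕ) (F : (ℕ → A) → A) : Prop :=
  ∀ b b' : ℕ → A, (∀ s, s < m → b s = b' s) → F b = F b'

/-- double insertion of `G` (with `mG` arguments) at slot `p` and `H` (with `mH` arguments)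
at slot `q`, where `p < q`. -/
def ins2 {A : Type} [AddCommGroup A] [Module ℝ A] (mG mH : ℕ) (G H : (ℕ → A) → A)
    (p q : ℕ) (a : ℕ → A) : ℕ → A := fun t =>
  if t < p then a t
  else if t = p then G (fun s => a (p + s))
  else if t < q then a (t + mG - 1)
  else if t = q then H (fun s => a (q + mG - 1 + s))
  else a (t + mG + mH - 2)

lemma sum_split3 {β : Type} [AddCommMonoid β] {b c d : ℕ} (hbc : b ≤ c) (hcd : c ≤ d)
    (f : ℕ → β) :
    ∑ j ∈ Finset.range d, f j
      = ∑ j ∈ Finset.range b, f j + ∑ j ∈ Finset.Ico b c, f j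
        + ∑ j ∈ Finset.Ico c d, f j := by
  rw [Finset.range_eq_Ico, ← Finset.sum_Ico_consecutive f (Nat.zero_le c) hcd,
    ← Finset.sum_Ico_consecutive f (Nat.zero_le b) hbc, ← Finset.range_eq_Ico]

section Claim1

variable {m₁ m₂ m₃ : ℕ} (Φ : MultilinearMap ℝ (fun _ : Fin m₁ => A) A)
  (G H : (ℕ → A) → A) (a : ℕ → A)

lemma eqA {i : ℕ} (hi : i < m₁) :
    (∑ j ∈ Finset.range i,
      ((-1:ℝ) ^ ((j:ℤ) * ((m₃:ℤ) - 1))) •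
        ((-1:ℝ) ^ ((i:ℤ) * ((m₂:ℤ) - 1))) •
          Φ (fun t : Fin m₁ =>
            if (t:ℕ) < i then
              (if (t:ℕ) < j then a t else if (t:ℕ) = j then H (fun s => a (j + s))
                else a ((t:ℕ) + m₃ - 1))
            else if (t:ℕ) = i then
              G (fun s => if i + s < j then a (i + s) else if i + s = j then
                H (fun u => a (j + u)) else a (i + s + m₃ - 1))
            else
              (if (t:ℕ) + m₂ - 1 < j then a ((t:ℕ) + m₂ - 1)
                else if (t:ℕ) + m₂ - 1 = j then H (fun s => a (j + s))
                else a ((t:ℕ) + m₂ - 1 + m₃ - 1))))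
    = ∑ p ∈ Finset.range i,
        ((-1:ℝ) ^ ((p:ℤ) * ((m₃:ℤ) - 1) + (i:ℤ) * ((m₂:ℤ) - 1))) •
          Φ (fun t : Fin m₁ => ins2 m₃ m₂ H G p i a t) := by
  refine Finset.sum_congr rfl fun p hp => ?_
  rw [Finset.mem_range] at hp
  rw [smul_smul, ← sgn_add]
  congr 1
  congr 1
  funext t
  simp only [ins2]
  split_ifs <;>
    first
      | rfl
      | (exfalso; omega)
      | (congr 1; omega)
      | (congr 1; funext s; split_ifs <;>
          first
            | rfl
            | (exfalso; omega)
            | (congr 1; omega)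
            | (congr 1; funext u; congr 1; omega))
      | (congr 1; funext s; congr 1; omega)

lemma eqB {i : ℕ} (hi : i < m₁) :
    (∑ j ∈ Finset.Ico i (i + m₂),
      ((-1:ℝ) ^ ((j:ℤ) * ((m₃:ℤ) - 1))) •
        ((-1:ℝ) ^ ((i:ℤ) * ((m₂:ℤ) - 1))) •
          Φ (fun t : Fin m₁ =>
            if (t:ℕ) < i then
              (if (t:ℕ) < j then a t else if (t:ℕ) = j then H (fun s => a (j + s))
                else a ((t:ℕ) + m₃ - 1))
            else if (t:ℕ) = i then
              G (fun s => if i + s < j then a (i + s) else if i + s = j then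
                H (fun u => a (j + u)) else a (i + s + m₃ - 1))
            else
              (if (t:ℕ) + m₂ - 1 < j then a ((t:ℕ) + m₂ - 1)
                else if (t:ℕ) + m₂ - 1 = j then H (fun s => a (j + s))
                else a ((t:ℕ) + m₂ - 1 + m₃ - 1))))
    = ((-1:ℝ) ^ ((i:ℤ) * (((m₂ + m₃ - 1 : ℕ):ℤ) - 1))) •
        Φ (fun t : Fin m₁ =>
          if (t:ℕ) < i then a t
          else if (t:ℕ) = i then
            (∑ r ∈ Finset.range m₂,
              ((-1:ℝ) ^ ((r:ℤ) * ((m₃:ℤ) - 1))) •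
                G (fun s => if s < r then a (i + s) else if s = r then
                  H (fun u => a (i + (r + u))) else a (i + (s + m₃ - 1))))
          else a ((t:ℕ) + (m₂ + m₃ - 1) - 1)) := by
  rcases Nat.eq_zero_or_pos m₂ with rfl | hm₂
  · rw [show (Finset.Ico i (i+0)) = ∅ by simp]
    rw [show (Finset.range 0) = ∅ from rfl, Finset.sum_empty, Finset.sum_empty,
      map_if_zero Φ hi a (fun u => a (u + (0 + m₃ - 1) - 1)), smul_zero]
  · rw [Finset.sum_Ico_eq_sum_range, show i + m₂ - i = m₂ by omega,
      map_if_sum Φ hi a (fun u => a (u + (m₂ + m₃ - 1) - 1)) (Finset.range m₂)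
        (fun r => ((-1:ℝ) ^ ((r:ℤ) * ((m₃:ℤ) - 1))) •
          G (fun s => if s < r then a (i + s) else if s = r then
            H (fun u => a (i + (r + u))) else a (i + (s + m₃ - 1)))),
      Finset.smul_sum]
    refine Finset.sum_congr rfl fun r hr => ?_
    rw [Finset.mem_range] at hr
    rw [map_if_smul Φ hi a (fun u => a (u + (m₂ + m₃ - 1) - 1))
        ((-1:ℝ) ^ ((r:ℤ) * ((m₃:ℤ) - 1)))
        (G (fun s => if s < r then a (i + s) else if s = r then
          H (fun u => a (i + (r + u))) else a (i + (s + m₃ - 1)))),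
      smul_smul, smul_smul, ← sgn_add, ← sgn_add]
    congr 1
    · congr 1
      rw [Nat.cast_sub (by omega : 1 ≤ m₂ + m₃)]
      push_cast
      ring
    · congr 1
      funext t
      split_ifs <;>
        first
          | rfl
          | (exfalso; omega)
          | (congr 1; omega)
          | (congr 1; funext s; split_ifs <;>
              first
                | rfl
                | (exfalso; omega)
                | (congr 1; omega)
                | (congr 1; funext u; congr 1; omega))
          | (congr 1; funext s; congr 1; omega)

lemma eqC (hG : DependsOn m₂ G) {i : ℕ} (hi : i < m₁) :
    (∑ j ∈ Finset.Ico (i + m₂) (m₁ + m₂ - 1),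
      ((-1:ℝ) ^ ((j:ℤ) * ((m₃:ℤ) - 1))) •
        ((-1:ℝ) ^ ((i:ℤ) * ((m₂:ℤ) - 1))) •
          Φ (fun t : Fin m₁ =>
            if (t:ℕ) < i then
              (if (t:ℕ) < j then a t else if (t:ℕ) = j then H (fun s => a (j + s))
                else a ((t:ℕ) + m₃ - 1))
            else if (t:ℕ) = i then
              G (fun s => if i + s < j then a (i + s) else if i + s = j then
                H (fun u => a (j + u)) else a (i + s + m₃ - 1))
            else
              (if (t:ℕ) + m₂ - 1 < j then a ((t:ℕ) + m₂ - 1)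
                else if (t:ℕ) + m₂ - 1 = j then H (fun s => a (j + s))
                else a ((t:ℕ) + m₂ - 1 + m₃ - 1))))
    = ∑ q ∈ Finset.Ico (i + 1) m₁,
        ((-1:ℝ) ^ ((i:ℤ) * ((m₂:ℤ) - 1) + (q:ℤ) * ((m₃:ℤ) - 1)
            + ((m₂:ℤ) - 1) * ((m₃:ℤ) - 1))) •
          Φ (fun t : Fin m₁ => ins2 m₂ m₃ G H i q a t) := by
  rw [Finset.sum_Ico_eq_sum_range, Finset.sum_Ico_eq_sum_range,
    show m₁ + m₂ - 1 - (i + m₂) = m₁ - (i + 1) by omega]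
  refine Finset.sum_congr rfl fun r hr => ?_
  rw [Finset.mem_range] at hr
  rw [smul_smul, ← sgn_add]
  congr 1
  · congr 1
    push_cast
    ring
  · congr 1
    funext t
    simp only [ins2]
    split_ifs <;>
      first
        | rfl
        | (exfalso; omega)
        | (congr 1; omega)
        | (refine hG _ _ fun s hs => ?_; split_ifs <;>
            first
              | rfl
              | (exfalso; omega)
              | (congr 1; omega))
        | (congr 1; funext s; split_ifs <;>
            first
              | rfl
              | (exfalso; omega)
              | (congr 1; omega)
              | (congr 1; funext u; congr 1; omega))
        | (congr 1; funext s; congr 1; omega)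

lemma claim1 (hG : DependsOn m₂ G) :
    gcompM (m₁ + m₂ - 1) m₃ (gcompM m₁ m₂ (evalC Φ) G) H a
      = gcompM m₁ (m₂ + m₃ - 1) (evalC Φ) (gcompM m₂ m₃ G H) a
        + ∑ i ∈ Finset.range m₁,
            ((∑ p ∈ Finset.range i,
                ((-1:ℝ) ^ ((p:ℤ) * ((m₃:ℤ) - 1) + (i:ℤ) * ((m₂:ℤ) - 1))) •
                  evalC Φ (ins2 m₃ m₂ H G p i a))
             + ∑ q ∈ Finset.Ico (i + 1) m₁,
                ((-1:ℝ) ^ ((i:ℤ) * ((m₂:ℤ) - 1) + (q:ℤ) * ((m₃:ℤ) - 1)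
                    + ((m₂:ℤ) - 1) * ((m₃:ℤ) - 1))) •
                  evalC Φ (ins2 m₂ m₃ G H i q a)) := by
  simp only [gcompM, evalC]
  simp only [Finset.smul_sum]
  conv_lhs => rw [Finset.sum_comm]
  conv_rhs => rw [← Finset.sum_add_distrib]
  refine Finset.sum_congr rfl fun i hi => ?_
  rw [Finset.mem_range] at hi
  rw [sum_split3 (show i ≤ i + m₂ by omega) (show i + m₂ ≤ m₁ + m₂ - 1 by omega)]
  rw [eqA Φ G H a hi, eqB Φ G H a hi, eqC Φ G H a hG hi]
  abel

lemma sgn_even_add (x c : ℤ) : ((-1:ℝ))^(x + 2*c) = (-1:ℝ)^x := by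
  rw [sgn_add, zpow_mul]
  norm_num

lemma tri {β : Type} [AddCommMonoid β] (n : ℕ) (f : ℕ → ℕ → β) :
    ∑ i ∈ Finset.range n, ∑ p ∈ Finset.range i, f p i
      = ∑ p ∈ Finset.range n, ∑ q ∈ Finset.Ico (p + 1) n, f p q := by
  induction n with
  | zero => simp
  | succ n ih =>
      rw [Finset.sum_range_succ, ih,
        Finset.sum_range_succ (fun p => ∑ q ∈ Finset.Ico (p + 1) (n + 1), f p q),
        show Finset.Ico (n + 1) (n + 1) = ∅ by simp, Finset.sum_empty, add_zero,
        ← Finset.sum_add_distrib]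
      refine Finset.sum_congr rfl fun p hp => ?_
      rw [Finset.mem_range] at hp
      rw [Finset.sum_Ico_succ_top (by omega : p + 1 ≤ n)]

lemma DDsym (m₁ m₂ m₃ : ℕ) (F G H : (ℕ → A) → A) (a : ℕ → A) :
    (∑ i ∈ Finset.range m₁,
      ((∑ p ∈ Finset.range i,
          ((-1:ℝ) ^ ((p:ℤ) * ((m₃:ℤ) - 1) + (i:ℤ) * ((m₂:ℤ) - 1))) •
            F (ins2 m₃ m₂ H G p i a))
       + ∑ q ∈ Finset.Ico (i + 1) m₁,
          ((-1:ℝ) ^ ((i:ℤ) * ((m₂:ℤ) - 1) + (q:ℤ) * ((m₃:ℤ) - 1)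
              + ((m₂:ℤ) - 1) * ((m₃:ℤ) - 1))) •
            F (ins2 m₂ m₃ G H i q a)))
    = ((-1:ℝ) ^ (((m₂:ℤ) - 1) * ((m₃:ℤ) - 1))) •
        ∑ i ∈ Finset.range m₁,
          ((∑ p ∈ Finset.range i,
              ((-1:ℝ) ^ ((p:ℤ) * ((m₂:ℤ) - 1) + (i:ℤ) * ((m₃:ℤ) - 1))) •
                F (ins2 m₂ m₃ G H p i a))
           + ∑ q ∈ Finset.Ico (i + 1) m₁,
              ((-1:ℝ) ^ ((i:ℤ) * ((m₃:ℤ) - 1) + (q:ℤ) * ((m₂:ℤ) - 1)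
                  + ((m₃:ℤ) - 1) * ((m₂:ℤ) - 1))) •
                F (ins2 m₃ m₂ H G i q a)) := by
  rw [Finset.smul_sum]
  simp only [smul_add, Finset.smul_sum, smul_smul, ← sgn_add]
  rw [Finset.sum_add_distrib, Finset.sum_add_distrib]
  have h1 :
      (∑ i ∈ Finset.range m₁, ∑ p ∈ Finset.range i,
        ((-1:ℝ) ^ ((p:ℤ) * ((m₃:ℤ) - 1) + (i:ℤ) * ((m₂:ℤ) - 1))) •
          F (ins2 m₃ m₂ H G p i a))
      = ∑ i ∈ Finset.range m₁, ∑ q ∈ Finset.Ico (i + 1) m₁,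
          ((-1:ℝ) ^ (((m₂:ℤ) - 1) * ((m₃:ℤ) - 1)
              + ((i:ℤ) * ((m₃:ℤ) - 1) + (q:ℤ) * ((m₂:ℤ) - 1)
                + ((m₃:ℤ) - 1) * ((m₂:ℤ) - 1)))) •
            F (ins2 m₃ m₂ H G i q a) := by
    rw [tri m₁ (fun p i => ((-1:ℝ) ^ ((p:ℤ) * ((m₃:ℤ) - 1) + (i:ℤ) * ((m₂:ℤ) - 1))) •
          F (ins2 m₃ m₂ H G p i a))]
    refine Finset.sum_congr rfl fun p hp => Finset.sum_congr rfl fun q hq => ?_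
    congr 1
    rw [show ((m₂:ℤ) - 1) * ((m₃:ℤ) - 1)
          + ((p:ℤ) * ((m₃:ℤ) - 1) + (q:ℤ) * ((m₂:ℤ) - 1) + ((m₃:ℤ) - 1) * ((m₂:ℤ) - 1))
        = ((p:ℤ) * ((m₃:ℤ) - 1) + (q:ℤ) * ((m₂:ℤ) - 1))
            + 2 * (((m₂:ℤ) - 1) * ((m₃:ℤ) - 1)) by ring, sgn_even_add]
  have h2 :
      (∑ i ∈ Finset.range m₁, ∑ q ∈ Finset.Ico (i + 1) m₁,
        ((-1:ℝ) ^ ((i:ℤ) * ((m₂:ℤ) - 1) + (q:ℤ) * ((m₃:ℤ) - 1)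
            + ((m₂:ℤ) - 1) * ((m₃:ℤ) - 1))) •
          F (ins2 m₂ m₃ G H i q a))
      = ∑ i ∈ Finset.range m₁, ∑ p ∈ Finset.range i,
          ((-1:ℝ) ^ (((m₂:ℤ) - 1) * ((m₃:ℤ) - 1)
              + ((p:ℤ) * ((m₂:ℤ) - 1) + (i:ℤ) * ((m₃:ℤ) - 1)))) •
            F (ins2 m₂ m₃ G H p i a) := by
    rw [tri m₁ (fun p i => ((-1:ℝ) ^ (((m₂:ℤ) - 1) * ((m₃:ℤ) - 1)
              + ((p:ℤ) * ((m₂:ℤ) - 1) + (i:ℤ) * ((m₃:ℤ) - 1)))) •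
            F (ins2 m₂ m₃ G H p i a))]
    refine Finset.sum_congr rfl fun p hp => Finset.sum_congr rfl fun q hq => ?_
    congr 1
    rw [show ((m₂:ℤ) - 1) * ((m₃:ℤ) - 1)
          + ((p:ℤ) * ((m₂:ℤ) - 1) + (q:ℤ) * ((m₃:ℤ) - 1))
        = ((p:ℤ) * ((m₂:ℤ) - 1) + (q:ℤ) * ((m₃:ℤ) - 1)
            + ((m₂:ℤ) - 1) * ((m₃:ℤ) - 1)) + 2 * 0 by ring, sgn_even_add]
  rw [h1, h2]
  exact add_comm _ _

lemma assoc_sym (m₁ m₂ m₃ : ℕ) (Φ : MultilinearMap ℝ (fun _ : Fin m₁ => A) A)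
    (G H : (ℕ → A) → A) (hG : DependsOn m₂ G) (hH : DependsOn m₃ H) (a : ℕ → A) :
    gcompM (m₁ + m₂ - 1) m₃ (gcompM m₁ m₂ (evalC Φ) G) H a
        - gcompM m₁ (m₂ + m₃ - 1) (evalC Φ) (gcompM m₂ m₃ G H) a
      = ((-1:ℝ) ^ (((m₂:ℤ) - 1) * ((m₃:ℤ) - 1))) •
          (gcompM (m₁ + m₃ - 1) m₂ (gcompM m₁ m₃ (evalC Φ) H) G a
            - gcompM m₁ (m₃ + m₂ - 1) (evalC Φ) (gcompM m₃ m₂ H G) a) := by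
  rw [claim1 Φ G H a hG, claim1 Φ H G a hH, add_sub_cancel_left, add_sub_cancel_left]
  exact DDsym m₁ m₂ m₃ (evalC Φ) G H a

end Claim1


lemma sgn_sq (p : ℤ) : ((-1:ℝ))^p * (-1:ℝ)^p = 1 := by
  rw [← sgn_add]
  have h : p + p = 2*p := by ring
  rw [h, zpow_mul]
  norm_num

lemma map_if_sub {A : Type} [AddCommGroup A] [Module ℝ A] {m : ℕ}
    (Φ : MultilinearMap ℝ (fun _ : Fin m => A) A) {i : ℕ} (hi : i < m)
    (b c : ℕ → A) (x y : A) :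
    (Φ fun j : Fin m => if (j:ℕ) < i then b j else if (j:ℕ) = i then x - y else c j)
      = (Φ fun j : Fin m => if (j:ℕ) < i then b j else if (j:ℕ) = i then x else c j)
        - (Φ fun j : Fin m => if (j:ℕ) < i then b j else if (j:ℕ) = i then y else c j) := by
  rw [ins_eq_update i hi b c, ins_eq_update i hi b c, ins_eq_update i hi b c,
    Φ.map_update_sub]

section Lin

variable {A : Type} [AddCommGroup A] [Module ℝ A]

lemma dependsOn_evalC {m : ℕ} (Φ : MultilinearMap ℝ (fun _ : Fin m => A) A) :
    DependsOn m (evalC Φ) := by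
  intro b b' h
  unfold evalC
  congr 1
  funext j
  exact h j j.isLt

lemma gcompM_evalC_zero {m n : ℕ} (Φ : MultilinearMap ℝ (fun _ : Fin m => A) A)
    {Z : (ℕ → A) → A} (hZ : ∀ b, Z b = 0) (a : ℕ → A) :
    gcompM m n (evalC Φ) Z a = 0 := by
  unfold gcompM evalC
  refine Finset.sum_eq_zero fun i hi => ?_
  rw [Finset.mem_range] at hi
  rw [Φ.map_coord_zero (⟨i, hi⟩ : Fin m) (by simp [hZ]), smul_zero]

lemma gcompM_sub_left {m n : ℕ} (X Y H : (ℕ → A) → A) (c : ℝ) (a : ℕ → A) :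
    gcompM m n (fun b => X b - c • Y b) H a = gcompM m n X H a - c • gcompM m n Y H a := by
  unfold gcompM
  rw [Finset.smul_sum, ← Finset.sum_sub_distrib]
  refine Finset.sum_congr rfl fun i _ => ?_
  module

lemma gcompM_evalC_sub {m n : ℕ} (Φ : MultilinearMap ℝ (fun _ : Fin m => A) A)
    (X Y : (ℕ → A) → A) (c : ℝ) (a : ℕ → A) :
    gcompM m n (evalC Φ) (fun b => X b - c • Y b) a
      = gcompM m n (evalC Φ) X a - c • gcompM m n (evalC Φ) Y a := by
  unfold gcompM evalC
  rw [Finset.smul_sum, ← Finset.sum_sub_distrib]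
  refine Finset.sum_congr rfl fun i hi => ?_
  rw [Finset.mem_range] at hi
  rw [map_if_sub Φ hi a (fun t => a (t + n - 1)) (X fun t => a (i + t))
      (c • Y fun t => a (i + t)),
    map_if_smul Φ hi a (fun t => a (t + n - 1)) c (Y fun t => a (i + t))]
  module

lemma t_convert (p q r : ℕ) (Φp : MultilinearMap ℝ (fun _ : Fin p => A) A)
    (Φq : MultilinearMap ℝ (fun _ : Fin q => A) A)
    (Φr : MultilinearMap ℝ (fun _ : Fin r => A) A) (a : ℕ → A) :
    ((-1:ℝ) ^ ((((p + q - 1 : ℕ):ℤ) - 1) * ((r:ℤ) - 1))) •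
      (gcompM r (p + q - 1) (evalC Φr) (gcompM p q (evalC Φp) (evalC Φq)) a
        - ((-1:ℝ) ^ (((p:ℤ) - 1) * ((q:ℤ) - 1))) •
            gcompM r (p + q - 1) (evalC Φr) (gcompM q p (evalC Φq) (evalC Φp)) a)
    = ((-1:ℝ) ^ (((p:ℤ) - 1) * ((r:ℤ) - 1)) * (-1:ℝ) ^ (((q:ℤ) - 1) * ((r:ℤ) - 1))) •
      (gcompM r (p + q - 1) (evalC Φr) (gcompM p q (evalC Φp) (evalC Φq)) a
        - ((-1:ℝ) ^ (((p:ℤ) - 1) * ((q:ℤ) - 1))) •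
            gcompM r (p + q - 1) (evalC Φr) (gcompM q p (evalC Φq) (evalC Φp)) a) := by
  rcases Nat.eq_zero_or_pos (p + q) with h | h
  · have hp : p = 0 := by omega
    have hq : q = 0 := by omega
    subst hp; subst hq
    rw [gcompM_evalC_zero Φr (fun b => by simp [gcompM]) a,
      gcompM_evalC_zero Φr (fun b => by simp [gcompM]) a]
    simp
  · have hs : ((-1:ℝ) ^ ((((p + q - 1 : ℕ):ℤ) - 1) * ((r:ℤ) - 1)))
        = ((-1:ℝ) ^ (((p:ℤ) - 1) * ((r:ℤ) - 1)) * (-1:ℝ) ^ (((q:ℤ) - 1) * ((r:ℤ) - 1))) := by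
      rw [← sgn_add]
      congr 1
      rw [Nat.cast_sub (by omega : 1 ≤ p + q)]
      push_cast
      ring
    rw [hs]

end Lin

lemma gbr_expand {A : Type} [AddCommGroup A] [Module ℝ A] (m₁ m₂ : ℕ)
    (F G : (ℕ → A) → A) :
    gbrM m₁ m₂ F G = fun b => gcompM m₁ m₂ F G b -
      ((-1 : ℝ) ^ (((m₁ : ℤ) - 1) * ((m₂ : ℤ) - 1))) • gcompM m₂ m₁ G F b := rfl

lemma jacobi_algebra {V : Type} [AddCommGroup V] [Module ℝ V]
    (s12 s13 s23 : ℝ) (h12 : s12 * s12 = 1) (h13 : s13 * s13 = 1) (h23 : s23 * s23 = 1)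
    (A123 A132 A213 A231 A312 A321 B123 B132 B213 B231 B312 B321 : V)
    (h1 : A123 - B123 = s23 • (A132 - B132))
    (h2 : A231 - B231 = s13 • (A213 - B213))
    (h3 : A312 - B312 = s12 • (A321 - B321)) :
    s13 • ((A123 - s12 • A213) - (s13 * s23) • (B312 - s12 • B321))
    + s12 • ((A231 - s23 • A321) - (s12 * s13) • (B123 - s23 • B132))
    + s23 • ((A312 - s13 • A132) - (s23 * s12) • (B231 - s13 • B213)) = 0 := by
  rcases mul_self_eq_one_iff.mp h12 with h | h <;> subst h <;>
  rcases mul_self_eq_one_iff.mp h13 with h | h <;> subst h <;>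
  rcases mul_self_eq_one_iff.mp h23 with h | h <;> subst h <;>
  first
    | linear_combination (norm := module) h1 + h2 + h3
    | linear_combination (norm := module) h1 + h2 - h3
    | linear_combination (norm := module) h1 - h2 + h3
    | linear_combination (norm := module) h1 - h2 - h3
    | linear_combination (norm := module) -h1 + h2 + h3
    | linear_combination (norm := module) -h1 + h2 - h3
    | linear_combination (norm := module) -h1 - h2 + h3
    | linear_combination (norm := module) -h1 - h2 - h3

end GerstAux

open GerstAux in
/-- For every unital associative algebra `A` over `ℝ`, the Gerstenhaber
bracket makes the graded vector space `C^•(A) = ⊕_{k ≥ -1} C^k(A)` of Hochschild cochains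
(`C^k(A) = Hom_ℝ(A^{⊗(k+1)}, A)`, encoded here by its number of arguments `m = k + 1`)
into a graded Lie superalgebra: it is graded antisymmetric and satisfies the graded
Jacobi identity. -/
theorem gerstenhaber_graded_lie (A : Type) [Ring A] [Algebra ℝ A] :
    (∀ (m₁ m₂ : ℕ) (Φ₁ : MultilinearMap ℝ (fun _ : Fin m₁ => A) A)
        (Φ₂ : MultilinearMap ℝ (fun _ : Fin m₂ => A) A) (a : ℕ → A),
        gbrM m₁ m₂ (evalC Φ₁) (evalC Φ₂) a
          = -(((-1 : ℝ) ^ (((m₁ : ℤ) - 1) * ((m₂ : ℤ) - 1))) •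
              gbrM m₂ m₁ (evalC Φ₂) (evalC Φ₁) a)) ∧
    (∀ (m₁ m₂ m₃ : ℕ) (Φ₁ : MultilinearMap ℝ (fun _ : Fin m₁ => A) A)
        (Φ₂ : MultilinearMap ℝ (fun _ : Fin m₂ => A) A)
        (Φ₃ : MultilinearMap ℝ (fun _ : Fin m₃ => A) A) (a : ℕ → A),
        ((-1 : ℝ) ^ (((m₁ : ℤ) - 1) * ((m₃ : ℤ) - 1))) •
            gbrM (m₁ + m₂ - 1) m₃ (gbrM m₁ m₂ (evalC Φ₁) (evalC Φ₂)) (evalC Φ₃) a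
          + ((-1 : ℝ) ^ (((m₂ : ℤ) - 1) * ((m₁ : ℤ) - 1))) •
            gbrM (m₂ + m₃ - 1) m₁ (gbrM m₂ m₃ (evalC Φ₂) (evalC Φ₃)) (evalC Φ₁) a
          + ((-1 : ℝ) ^ (((m₃ : ℤ) - 1) * ((m₂ : ℤ) - 1))) •
            gbrM (m₃ + m₁ - 1) m₂ (gbrM m₃ m₁ (evalC Φ₃) (evalC Φ₁)) (evalC Φ₂) a
          = 0) := by
  constructor
  · intro m₁ m₂ Φ₁ Φ₂ a
    simp only [gbrM]
    rw [show ((m₂:ℤ) - 1) * ((m₁:ℤ) - 1) = ((m₁:ℤ) - 1) * ((m₂:ℤ) - 1) from mul_comm _ _]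
    rw [smul_sub, smul_smul, sgn_sq, one_smul, neg_sub]
  · intro m₁ m₂ m₃ Φ₁ Φ₂ Φ₃ a
    have h1 := assoc_sym m₁ m₂ m₃ Φ₁ (evalC Φ₂) (evalC Φ₃)
      (dependsOn_evalC Φ₂) (dependsOn_evalC Φ₃) a
    have h2 := assoc_sym m₂ m₃ m₁ Φ₂ (evalC Φ₃) (evalC Φ₁)
      (dependsOn_evalC Φ₃) (dependsOn_evalC Φ₁) a
    have h3 := assoc_sym m₃ m₁ m₂ Φ₃ (evalC Φ₁) (evalC Φ₂)
      (dependsOn_evalC Φ₁) (dependsOn_evalC Φ₂) a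
    have mc21 : ((m₂:ℤ) - 1) * ((m₁:ℤ) - 1) = ((m₁:ℤ) - 1) * ((m₂:ℤ) - 1) := mul_comm _ _
    have mc31 : ((m₃:ℤ) - 1) * ((m₁:ℤ) - 1) = ((m₁:ℤ) - 1) * ((m₃:ℤ) - 1) := mul_comm _ _
    have mc32 : ((m₃:ℤ) - 1) * ((m₂:ℤ) - 1) = ((m₂:ℤ) - 1) * ((m₃:ℤ) - 1) := mul_comm _ _
    rw [Nat.add_comm m₁ m₃, Nat.add_comm m₃ m₂] at h1
    rw [Nat.add_comm m₂ m₁, Nat.add_comm m₁ m₃, mc31] at h2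
    rw [Nat.add_comm m₃ m₂, Nat.add_comm m₂ m₁] at h3
    simp only [gbr_expand]
    simp only [gcompM_sub_left, gcompM_evalC_sub]
    rw [t_convert m₁ m₂ m₃ Φ₁ Φ₂ Φ₃ a, t_convert m₂ m₃ m₁ Φ₂ Φ₃ Φ₁ a,
      t_convert m₃ m₁ m₂ Φ₃ Φ₁ Φ₂ a]
    rw [mc21, mc31, mc32]
    exact jacobi_algebra _ _ _ (sgn_sq _) (sgn_sq _) (sgn_sq _)
      _ _ _ _ _ _ _ _ _ _ _ _ h1 h2 h3
end

section
/- Let A be a commutative unital ℝ-algebra. Then for every k ≥ 0 the Connes map annihilates Hochschild boundaries: 𝔠_k ∘ b = 0 as a map A^{⊗(k+2)} → Ω^k. Hence 𝔠 = (𝔠_k)_{k≥0} is a morphism of complexes from the Hochschild chain complex (C_•, b) to the complex of Kähler differential forms (Ω^•, 0) with zero differential. -/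
/-!
The Connes map sends `a₀ ⊗ ⋯ ⊗ a_{k+1}` with `a_j a_{j+1}` contracted to the sum of two forms by
the Leibniz rule `d(a_j a_{j+1}) = a_j da_{j+1} + a_{j+1} da_j`. Writing `q_j` for the form with the
scalar `a₀ a_{j+1}` in front and `da_{j+1}` omitted, the `0`-th face gives `q₀`, the face `j` with
`1 ≤ j ≤ k` gives `q_{j-1} + q_j`, and the cyclic face gives `q_k`; the alternating sum telescopes.
-/

open scoped BigOperators

/-- A decomposable element `u 0 ∧ u 1 ∧ ⋯ ∧ u (m-1)` of the `m`-th exterior power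
`Λ^m_R M`, realized as a submodule of the exterior algebra. -/
def wedgeDec (R M : Type) [CommRing R] [AddCommGroup M] [Module R M] (m : ℕ)
    (u : Fin m → M) : (⋀[R]^m M : Submodule R (ExteriorAlgebra R M)) :=
  ⟨ExteriorAlgebra.ιMulti R m u,
    ExteriorAlgebra.ιMulti_range R m (Set.mem_range_self u)⟩

/-- The Connes map `𝔠_k` on an elementary Hochschild chain `a 0 ⊗ a 1 ⊗ ⋯ ⊗ a k`:
`𝔠_k(a₀ ⊗ ⋯ ⊗ a_k) = a₀ da₁ ∧ ⋯ ∧ da_k ∈ Ω^k = Λ^k_A Ω¹_{A/ℝ}`. -/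
noncomputable def connesElem (A : Type) [CommRing A] [Algebra ℝ A] (k : ℕ) (a : ℕ → A) :
    (⋀[A]^k (KaehlerDifferential ℝ A) :
      Submodule A (ExteriorAlgebra A (KaehlerDifferential ℝ A))) :=
  a 0 • wedgeDec A (KaehlerDifferential ℝ A) k
    (fun t : Fin k => KaehlerDifferential.D ℝ A (a ((t : ℕ) + 1)))

open Function

theorem AlternatingMap.map_update_derivation_mul {R A M N ι : Type*} [CommSemiring R]
    [CommSemiring A] [Algebra R A] [AddCommMonoid M] [Module A M] [Module R M]
    [IsScalarTower R A M] [AddCommMonoid N] [Module A N] [DecidableEq ι]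
    (f : M [⋀^ι]→ₗ[A] N) (D : Derivation R A M) (v : ι → M) (i : ι) (x y : A) :
    f (update v i (D (x * y))) = x • f (update v i (D y)) + y • f (update v i (D x)) := by
  rw [Derivation.leibniz, f.map_update_add, f.map_update_smul, f.map_update_smul]

namespace Hochschild

variable {A : Type*} [Mul A]

def face (i : ℕ) (a : ℕ → A) : ℕ → A :=
  fun p => if p < i then a p else if p = i then a p * a (p + 1) else a (p + 1)

def cyclicFace (n : ℕ) (a : ℕ → A) : ℕ → A :=
  fun p => if p = 0 then a n * a 0 else a p

/-- The chain `a₀ a_{j+1} ⊗ a₁ ⊗ ⋯ ⊗ a_j ⊗ a_{j+2} ⊗ ⋯`, with `a_{j+1}` moved to the front. -/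
def frontMul (j : ℕ) (a : ℕ → A) : ℕ → A :=
  fun p => if p = 0 then a 0 * a (j + 1) else if p ≤ j then a p else a (p + 1)

theorem face_zero (a : ℕ → A) : face 0 a = frontMul 0 a := by
  funext p
  rcases p with _ | p <;> simp [face, frontMul]

end Hochschild

open Hochschild

section ConnesMap

variable {A : Type} [CommRing A] [Algebra ℝ A]

local notation "𝒹" => KaehlerDifferential.D ℝ A

theorem connesElem_eq (k : ℕ) (a : ℕ → A) :
    connesElem A k a = a 0 • exteriorPower.ιMulti A k (fun t : Fin k => 𝒹 (a (t + 1))) :=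
  rfl

theorem connesElem_congr {k : ℕ} {a b : ℕ → A} (h : ∀ p ≤ k, a p = b p) :
    connesElem A k a = connesElem A k b := by
  simp only [connesElem_eq, h 0 k.zero_le]
  congr 2
  funext t
  rw [h _ t.isLt]

theorem connesElem_cyclicFace (k : ℕ) (a : ℕ → A) :
    connesElem A k (cyclicFace (k + 1) a) = connesElem A k (frontMul k a) :=
  connesElem_congr fun p hp => by
    rcases p with _ | p
    · simp [cyclicFace, frontMul, mul_comm]
    · simp [cyclicFace, frontMul, hp]

theorem connesElem_face_succ {k i : ℕ} (hi : i < k) (a : ℕ → A) :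
    connesElem A k (face (i + 1) a) =
      connesElem A k (frontMul i a) + connesElem A k (frontMul (i + 1) a) := by
  set v : Fin k → Ω[A⁄ℝ] := fun t => 𝒹 (frontMul (i + 1) a (t + 1))
  have hface : (fun t : Fin k => 𝒹 (face (i + 1) a (t + 1))) =
      update v ⟨i, hi⟩ (𝒹 (a (i + 1) * a (i + 2))) := by
    refine (update_eq_iff.2 ⟨by simp [face], fun t ht => ?_⟩).symm
    have ht : (t : ℕ) ≠ i := fun h => ht (Fin.ext h)
    simp only [v, face, frontMul]
    split_ifs <;> first | rfl | contradiction | omega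
  have hfront :
      (fun t : Fin k => 𝒹 (frontMul i a (t + 1))) = update v ⟨i, hi⟩ (𝒹 (a (i + 2))) := by
    refine (update_eq_iff.2 ⟨by simp [frontMul], fun t ht => ?_⟩).symm
    have ht : (t : ℕ) ≠ i := fun h => ht (Fin.ext h)
    simp only [v, frontMul]
    split_ifs <;> first | rfl | contradiction | omega
  have hfront_succ : update v ⟨i, hi⟩ (𝒹 (a (i + 1))) = v :=
    update_eq_self_iff.2 (by simp [v, frontMul])
  rw [connesElem_eq, hface, AlternatingMap.map_update_derivation_mul, hfront_succ, ← hfront,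
    smul_add, smul_smul, smul_smul]
  rfl

end ConnesMap

/-- Let `A` be a commutative unital `ℝ`-algebra.  Then for every `k ≥ 0`
the Connes map annihilates Hochschild boundaries: `𝔠_k ∘ b = 0` as a map
`A^{⊗(k+2)} → Ω^k`.  Hence `𝔠 = (𝔠_k)` is a morphism of complexes from the Hochschild
chain complex `(C_•, b)` to the complex of Kähler differential forms `(Ω^•, 0)`.
(The identity is stated on every elementary chain `a 0 ⊗ ⋯ ⊗ a (k+1)`, with
`b(a₀ ⊗ ⋯ ⊗ a_{k+1}) = ∑_{i=0}^{k} (-1)^i a₀ ⊗ ⋯ ⊗ a_i a_{i+1} ⊗ ⋯ ⊗ a_{k+1}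
 + (-1)^{k+1} a_{k+1} a₀ ⊗ a₁ ⊗ ⋯ ⊗ a_k` expanded by linearity of `𝔠_k`;
elementary chains span `A^{⊗(k+2)}`.) -/
theorem connes_map_annihilates_hochschild_boundaries
    (A : Type) [CommRing A] [Algebra ℝ A] (k : ℕ) (a : ℕ → A) :
    (∑ i ∈ Finset.range (k + 1),
        ((-1 : ℤ) ^ i) •
          connesElem A k (fun p =>
            if p < i then a p else if p = i then a p * a (p + 1) else a (p + 1))) +
      ((-1 : ℤ) ^ (k + 1)) •
        connesElem A k (fun p => if p = 0 then a (k + 1) * a 0 else a p) = 0 := by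
  change ∑ i ∈ Finset.range (k + 1), ((-1 : ℤ) ^ i) • connesElem A k (face i a) +
      ((-1 : ℤ) ^ (k + 1)) • connesElem A k (cyclicFace (k + 1) a) = 0
  set q : ℕ → ⋀[A]^k Ω[A⁄ℝ] := fun j => ((-1 : ℤ) ^ j) • connesElem A k (frontMul j a)
  have hface : ∀ i < k,
      ((-1 : ℤ) ^ (i + 1)) • connesElem A k (face (i + 1) a) = q (i + 1) - q i := fun i hi => by
    simp only [q, connesElem_face_succ hi, smul_add, pow_succ, mul_neg_one, neg_smul]
    abel
  rw [Finset.sum_range_succ', Finset.sum_congr rfl fun i hi => hface i (Finset.mem_range.1 hi),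
    Finset.sum_range_sub, face_zero, connesElem_cyclicFace, pow_succ, mul_neg_one, neg_smul]
  simp only [q, pow_zero, one_smul]
  abel
end

section
/- Let A be a commutative unital ℝ-algebra. For every k ≥ −1 and every polyvector field γ ∈ Λ^{k+1}_A Der(A), the Hochschild cochain V(γ) ∈ C^k(A) is a cocycle: ∂(V(γ)) = [μ, V(γ)]_G = 0. -/
open scoped BigOperators

set_option synthInstance.maxHeartbeats 1000000
set_option maxHeartbeats 1000000

/-- The multiplication of `A` viewed as a raw Hochschild cochain in `C^1(A)`. -/
def mulC (A : Type) [Mul A] : (ℕ → A) → A := fun a => a 0 * a 1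

/-- The value of the Hochschild–Kostant–Rosenberg map on a decomposable polyvector field
`u 0 ∧ ⋯ ∧ u (m-1)` (with `m = k + 1`), namely the Hochschild cochain
`(a₀, …, a_k) ↦ (1/(k+1)!) ∑_{ε ∈ S_{k+1}} sgn(ε) u_{ε(0)}(a₀) ⋯ u_{ε(k)}(a_k)`. -/
noncomputable def hkrDec (A : Type) [CommRing A] [Algebra ℝ A] (m : ℕ)
    (u : Fin m → Derivation ℝ A A) : MultilinearMap ℝ (fun _ : Fin m => A) A :=
  ((m.factorial : ℝ))⁻¹ •
    ∑ ε : Equiv.Perm (Fin m),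
      ((Equiv.Perm.sign ε : ℤ)) •
        (MultilinearMap.mkPiAlgebra ℝ (Fin m) A).compLinearMap
          (fun i => (u (ε i)).toLinearMap)


section Helpers

variable {A : Type} [CommRing A] [Algebra ℝ A]

lemma telesc (m : ℕ) (Q : ℕ → A) :
    ∑ i ∈ Finset.range m, ((-1:ℝ)^(i:ℤ)) • (Q i + Q (i+1))
      = Q 0 + ((-1:ℝ)^((m:ℤ)-1)) • Q m := by
  induction m with
  | zero => norm_num
  | succ n ih =>
    rw [Finset.sum_range_succ, ih]
    have h1 : ((-1:ℝ))^((n:ℤ)-1) = -((-1:ℝ))^(n:ℤ) := by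
      rw [zpow_sub_one₀ (by norm_num)]; norm_num
    have h2 : ((((n+1):ℕ):ℤ)) - 1 = (n:ℤ) := by push_cast; ring
    rw [h1, h2]
    module

lemma gbr_eval (m : ℕ) (Φ : MultilinearMap ℝ (fun _ : Fin m => A) A) (a : ℕ → A) :
    gbrM 2 m (mulC A) (evalC Φ) a =
      Φ (fun j => a j) * a m
        + ((-1:ℝ)^((m:ℤ)-1)) • (a 0 * Φ (fun j => a (1 + (j:ℕ))))
        - ((-1:ℝ)^((m:ℤ)-1)) • ∑ i ∈ Finset.range m, ((-1:ℝ)^(i:ℤ)) •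
            Φ (fun j => if (j:ℕ) < i then a (j:ℕ) else if (j:ℕ) = i
                then a i * a (i+1) else a ((j:ℕ)+1)) := by
  unfold gbrM gcompM evalC mulC
  rw [Finset.sum_range_succ, Finset.sum_range_succ, Finset.sum_range_zero]
  norm_num

lemma core (m : ℕ) (d : Fin m → Derivation ℝ A A) (a : ℕ → A) :
    gbrM 2 m (mulC A)
      (evalC ((MultilinearMap.mkPiAlgebra ℝ (Fin m) A).compLinearMap
        (fun i => (d i).toLinearMap))) a = 0 := by
  rw [gbr_eval]
  simp only [MultilinearMap.compLinearMap_apply, MultilinearMap.mkPiAlgebra_apply,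
    Derivation.coeFn_coe]
  set Pv : ℕ → Fin m → A := fun k j => d j (if (j:ℕ) < k then a j else a ((j:ℕ)+1)) with hPv
  set Q : ℕ → A := fun k => a k * ∏ j, Pv k j with hQ
  have hstep : ∀ i ∈ Finset.range m,
      ((-1:ℝ)^(i:ℤ)) • (∏ j : Fin m, d j (if (j:ℕ) < i then a (j:ℕ)
          else if (j:ℕ) = i then a i * a (i+1) else a ((j:ℕ)+1)))
      = ((-1:ℝ)^(i:ℤ)) • (Q i + Q (i+1)) := by
    intro i hi
    rw [Finset.mem_range] at hi
    congr 1
    set i' : Fin m := (⟨i, hi⟩ : Fin m) with hi'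
    have hfun : (fun j : Fin m => d j (if (j:ℕ) < i then a (j:ℕ)
          else if (j:ℕ) = i then a i * a (i+1) else a ((j:ℕ)+1)))
        = Function.update (Pv i) i' ((d i') (a i * a (i+1))) := by
      funext j
      rcases eq_or_ne j i' with rfl | hj
      · simp [hi']
      · have hj' : (j:ℕ) ≠ i := fun h => hj (Fin.ext (by simp [hi', h]))
        rw [Function.update_of_ne hj]
        simp [hPv, hj']
    rw [hfun, Finset.prod_update_of_mem (Finset.mem_univ i'), Derivation.leibniz]
    have hR : ∏ j ∈ Finset.univ.erase i', Pv (i+1) j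
        = ∏ j ∈ Finset.univ.erase i', Pv i j := by
      refine Finset.prod_congr rfl fun j hj => ?_
      have hj' : (j:ℕ) ≠ i := fun h => (Finset.mem_erase.mp hj).1 (Fin.ext (by simp [hi', h]))
      simp only [hPv]
      congr 1
      by_cases h : (j:ℕ) < i
      · simp [h, Nat.lt_succ_of_lt h]
      · have h2 : ¬ (j:ℕ) < i + 1 := by omega
        simp [h, h2]
    have e1 : ∏ j, Pv i j = (d i') (a (i+1)) * ∏ j ∈ Finset.univ.erase i', Pv i j := by
      rw [← Finset.mul_prod_erase _ _ (Finset.mem_univ i')]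
      congr 1
      simp [hPv, hi']
    have e2 : ∏ j, Pv (i+1) j = (d i') (a i) * ∏ j ∈ Finset.univ.erase i', Pv i j := by
      rw [← Finset.mul_prod_erase _ _ (Finset.mem_univ i'), hR]
      congr 1
      simp [hPv, hi']
    simp only [hQ, e1, e2, smul_eq_mul, Finset.erase_eq]
    ring
  rw [Finset.sum_congr rfl hstep, telesc]
  have h0 : ∏ j : Fin m, Pv 0 j = ∏ j : Fin m, d j (a (1 + (j:ℕ))) :=
    Finset.prod_congr rfl fun j _ => by simp [hPv, Nat.add_comm]
  have hm : ∏ j : Fin m, Pv m j = ∏ j : Fin m, d j (a (j:ℕ)) :=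
    Finset.prod_congr rfl fun j _ => by simp [hPv, j.isLt]
  have hs : ((-1:ℝ)^((m:ℤ)-1)) * ((-1:ℝ)^((m:ℤ)-1)) = 1 := by
    rw [← zpow_add₀ (by norm_num : (-1:ℝ) ≠ 0)]
    exact Even.neg_one_zpow ⟨(m:ℤ)-1, by ring⟩
  rw [smul_add, smul_smul, hs, one_smul]
  simp only [hQ, h0, hm]
  ring

/-- The Hochschild coboundary evaluated at `a`, as an `ℝ`-linear map in the cochain. -/
noncomputable def cob (m : ℕ) (a : ℕ → A) :
    MultilinearMap ℝ (fun _ : Fin m => A) A →ₗ[ℝ] A where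
  toFun Φ := gbrM 2 m (mulC A) (evalC Φ) a
  map_add' Φ Φ' := by
    simp only [gbr_eval, MultilinearMap.add_apply, add_mul, mul_add, smul_add,
      Finset.sum_add_distrib]
    abel
  map_smul' r Φ := by
    simp only [gbr_eval, MultilinearMap.smul_apply, smul_mul_assoc, mul_smul_comm,
      RingHom.id_apply, smul_comm _ r, ← Finset.smul_sum, smul_sub, smul_add]

@[simp] lemma cob_apply (m : ℕ) (a : ℕ → A) (Φ : MultilinearMap ℝ (fun _ : Fin m => A) A) :
    cob m a Φ = gbrM 2 m (mulC A) (evalC Φ) a := rfl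

lemma cob_Asmul (m : ℕ) (a : ℕ → A) (c : A) (Φ : MultilinearMap ℝ (fun _ : Fin m => A) A) :
    cob m a (c • Φ) = c • cob m a Φ := by
  simp only [cob_apply, gbr_eval, MultilinearMap.smul_apply, smul_eq_mul]
  simp [mul_sub, mul_add, Finset.mul_sum, mul_smul_comm, mul_assoc, mul_left_comm, mul_comm]

lemma cob_hkr (m : ℕ) (a : ℕ → A) (u : Fin m → Derivation ℝ A A) :
    cob m a (hkrDec A m u) = 0 := by
  unfold hkrDec
  rw [map_smul, map_sum]
  simp only [map_zsmul]
  simp [core]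

end Helpers
/-- Let `A` be a commutative unital `ℝ`-algebra.  For every `k ≥ -1`
(encoded by `m = k + 1 ≥ 0`) and every polyvector field `γ ∈ Λ^{k+1}_A Der(A)`, the
Hochschild cochain `V(γ) ∈ C^k(A)` is a cocycle: `∂(V(γ)) = [μ, V(γ)]_G = 0`.  Here `V`
is the (A-linear) Hochschild–Kostant–Rosenberg map, characterized by its values on
decomposables. -/
theorem hkr_image_is_cocycle (A : Type) [CommRing A] [Algebra ℝ A] (m : ℕ)
    (V : (⋀[A]^m (Derivation ℝ A A) :
        Submodule A (ExteriorAlgebra A (Derivation ℝ A A))) →ₗ[A]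
      MultilinearMap ℝ (fun _ : Fin m => A) A)
    (hV : ∀ u : Fin m → Derivation ℝ A A,
      V (wedgeDec A (Derivation ℝ A A) m u) = hkrDec A m u)
    (γ : (⋀[A]^m (Derivation ℝ A A) :
        Submodule A (ExteriorAlgebra A (Derivation ℝ A A)))) :
    ∀ a : ℕ → A, gbrM 2 m (mulC A) (evalC (V γ)) a = 0 := by
  intro a
  obtain ⟨x, hx⟩ := γ
  have hx' : x ∈ Submodule.span A (Set.range (ExteriorAlgebra.ιMulti A m
      (M := Derivation ℝ A A))) := by
    rw [ExteriorAlgebra.ιMulti_span_fixedDegree]; exact hx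
  show cob m a (V ⟨x, hx⟩) = 0
  refine Submodule.span_induction
    (p := fun y _ => ∀ (h : y ∈ ⋀[A]^m (Derivation ℝ A A)), cob m a (V ⟨y, h⟩) = 0)
    ?_ ?_ ?_ ?_ hx' hx
  · rintro z ⟨u, rfl⟩ h
    have hz : (⟨ExteriorAlgebra.ιMulti A m u, h⟩ :
        (⋀[A]^m (Derivation ℝ A A) : Submodule A _)) = wedgeDec A (Derivation ℝ A A) m u :=
      Subtype.ext rfl
    rw [hz, hV, cob_hkr]
  · intro h
    have hz : (⟨0, h⟩ : (⋀[A]^m (Derivation ℝ A A) : Submodule A _)) = 0 := Subtype.ext rfl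
    rw [hz, map_zero, map_zero]
  · intro y z hys hzs ihy ihz h
    rw [ExteriorAlgebra.ιMulti_span_fixedDegree] at hys hzs
    have hz : (⟨y + z, h⟩ : (⋀[A]^m (Derivation ℝ A A) : Submodule A _))
        = ⟨y, hys⟩ + ⟨z, hzs⟩ := Subtype.ext rfl
    rw [hz, map_add, map_add, ihy hys, ihz hzs, add_zero]
  · intro c y hys ihy h
    rw [ExteriorAlgebra.ιMulti_span_fixedDegree] at hys
    have hz : (⟨c • y, h⟩ : (⋀[A]^m (Derivation ℝ A A) : Submodule A _))
        = c • ⟨y, hys⟩ := Subtype.ext rfl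
    rw [hz, map_smul, cob_Asmul, ihy hys, smul_zero]
end

section
/- The assignment γ ↦ L_γ makes the graded space Ω^• of Kähler differential forms of A a graded Lie algebra module over the polyvector fields with the Schouten–Nijenhuis bracket: for all γ₁ ∈ Λ^{k₁+1}_A Der(A) and γ₂ ∈ Λ^{k₂+1}_A Der(A), L_{γ₁}∘L_{γ₂} − (−1)^{k₁k₂} L_{γ₂}∘L_{γ₁} = L_{[γ₁,γ₂]_SN} as operators on Ω^•. -/
/-!
Both sides are additive in `γ₁` and `γ₂`, and decomposable polyvector fields generate
`Λ^{k+1}_A Der(A)` additively (a scalar is absorbed into a factor), so it suffices to treat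
`γ₁ = u₀ ∧ ⋯ ∧ u_{k₁}` and `γ₂ = v₀ ∧ ⋯ ∧ v_{k₂}`, where `i_γ` is a composite of contractions.
In the ring of additive endomorphisms of `Ω^•` everything then follows from three identities,
the last two proved by induction over forms built from functions by multiplying with exact
1-forms `db`: `d² = 0`, `ι_u ι_v = -ι_v ι_u`, and Cartan's formula `[L_u, ι_v] = ι_{[u,v]}`.
Peeling off one factor at a time gives `[L_{γ₁}, ι_v]` and then
`[L_{γ₁}, i_{γ₂}] = ±i_{[γ₁,γ₂]_SN}`.
Since `L_γ = [d, i_γ]` and `d² = 0`, the graded Jacobi identity turns this into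
`[L_{γ₁}, L_{γ₂}] = [d, i_{[γ₁,γ₂]_SN}] = L_{[γ₁,γ₂]_SN}`.
-/

open scoped BigOperators

set_option synthInstance.maxHeartbeats 1000000
set_option maxHeartbeats 1000000

/-- The polynomial algebra `A = ℝ[x₁,…,x_d]`. -/
abbrev PA (d : ℕ) := MvPolynomial (Fin d) ℝ

/-- The `A`-module `Ω¹ = Ω_{A/ℝ}` of Kähler differentials. -/
abbrev KD (d : ℕ) := KaehlerDifferential ℝ (PA d)

/-- The exterior algebra `Λ_A Ω¹`, containing the forms `Ω^n = Λ^n_A Ω¹` as the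
submodules `⋀[A]^n Ω¹`. -/
abbrev FormAlg (d : ℕ) := ExteriorAlgebra (PA d) (KD d)

/-- The `A`-module `Der(A)` of `ℝ`-linear derivations of `A`. -/
abbrev DerA (d : ℕ) := Derivation ℝ (PA d) (PA d)

/-- The module `Λ^m_A Der(A)` of polyvector fields. -/
noncomputable abbrev PolyVec (d m : ℕ) :=
  (⋀[PA d]^m (DerA d) : Submodule (PA d) (ExteriorAlgebra (PA d) (DerA d)))

theorem ExteriorAlgebra.ι_mem_exteriorPower_one {R M : Type*} [CommRing R] [AddCommGroup M]
    [Module R M] (m : M) : ExteriorAlgebra.ι R m ∈ ⋀[R]^1 M := by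
  rw [ExteriorAlgebra.exteriorPower, pow_one]
  exact LinearMap.mem_range_self _ m

section

variable {R A : Type*} [CommRing R] [CommRing A] [Algebra R A]

local notation "dA" b:max => ExteriorAlgebra.ι A (KaehlerDifferential.D R A b)

theorem KaehlerDifferential.exteriorAlgebra_induction
    {P : ExteriorAlgebra A Ω[A⁄R] → Prop} (algebraMap : ∀ a : A, P (algebraMap A _ a))
    (add : ∀ x y, P x → P y → P (x + y)) (smul : ∀ (a : A) x, P x → P (a • x))
    (D_mul : ∀ (b : A) x, P x → P (dA b * x)) (x : ExteriorAlgebra A Ω[A⁄R]) : P x := by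
  induction x using CliffordAlgebra.left_induction with
  | algebraMap a => exact algebraMap a
  | add x y hx hy => exact add x y hx hy
  | ι_mul x ω hx =>
    have hω : ω ∈ Submodule.span A (Set.range (KaehlerDifferential.D R A)) := by
      rw [KaehlerDifferential.span_range_derivation]; trivial
    induction hω using Submodule.span_induction with
    | mem _ hω => obtain ⟨b, rfl⟩ := hω; exact D_mul b x hx
    | zero => simpa using smul 0 x hx
    | add _ _ _ _ h₁ h₂ => simpa [add_mul] using add _ _ h₁ h₂
    | smul a _ _ h => simpa using smul a _ h

variable (R A) in
structure CartanCalculus where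
  d : Module.End ℤ (ExteriorAlgebra A Ω[A⁄R])
  ι : Derivation R A A → Module.End ℤ (ExteriorAlgebra A Ω[A⁄R])
  d_algebraMap (a : A) : d (algebraMap A _ a) = dA a
  d_d (x : ExteriorAlgebra A Ω[A⁄R]) : d (d x) = 0
  d_mul (n : ℕ) (x y : ExteriorAlgebra A Ω[A⁄R]) : x ∈ ⋀[A]^n Ω[A⁄R] →
    d (x * y) = d x * y + (-1 : ℤ) ^ n • (x * d y)
  ι_smul (u : Derivation R A A) (a : A) (x : ExteriorAlgebra A Ω[A⁄R]) : ι u (a • x) = a • ι u x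
  ι_D (u : Derivation R A A) (a : A) : ι u (dA a) = algebraMap A _ (u a)
  ι_mul (u : Derivation R A A) (n : ℕ) (x y : ExteriorAlgebra A Ω[A⁄R]) : x ∈ ⋀[A]^n Ω[A⁄R] →
    ι u (x * y) = ι u x * y + (-1 : ℤ) ^ n • (x * ι u y)

namespace CartanCalculus

variable (S : CartanCalculus R A)

theorem d_mul_d : S.d * S.d = 0 := LinearMap.ext S.d_d

theorem ι_algebraMap (u : Derivation R A A) (a : A) : S.ι u (algebraMap A _ a) = 0 := by
  have h := S.ι_mul u 0 1 1 (SetLike.one_mem_graded _)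
  simp only [mul_one, one_mul, pow_zero, one_smul, left_eq_add] at h
  rw [Algebra.algebraMap_eq_smul_one, S.ι_smul, h, smul_zero]

theorem ι_D_mul (u : Derivation R A A) (b : A) (y : ExteriorAlgebra A Ω[A⁄R]) :
    S.ι u (dA b * y) = u b • y - dA b * S.ι u y := by
  rw [S.ι_mul u 1 _ y (ExteriorAlgebra.ι_mem_exteriorPower_one _), S.ι_D, ← Algebra.smul_def,
    pow_one, neg_one_zsmul, sub_eq_add_neg]

theorem d_D (b : A) : S.d (dA b) = 0 := by
  rw [← S.d_algebraMap, S.d_d]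

theorem d_D_mul (b : A) (y : ExteriorAlgebra A Ω[A⁄R]) : S.d (dA b * y) = -(dA b * S.d y) := by
  rw [S.d_mul 1 _ y (ExteriorAlgebra.ι_mem_exteriorPower_one _), S.d_D, zero_mul, zero_add,
    pow_one, neg_one_zsmul]

theorem d_smul (a : A) (y : ExteriorAlgebra A Ω[A⁄R]) : S.d (a • y) = dA a * y + a • S.d y := by
  rw [Algebra.smul_def, S.d_mul 0 _ y (SetLike.algebraMap_mem_graded _ a), S.d_algebraMap,
    pow_zero, one_smul, ← Algebra.smul_def]

theorem ι_mul_ι_comm (u v : Derivation R A A) : S.ι u * S.ι v = -(S.ι v * S.ι u) := by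
  suffices h : ∀ x u v, S.ι u (S.ι v x) + S.ι v (S.ι u x) = 0 from
    LinearMap.ext fun x => eq_neg_of_add_eq_zero_left (h x u v)
  intro x
  induction x using KaehlerDifferential.exteriorAlgebra_induction with
  | algebraMap a => simp [S.ι_algebraMap]
  | add x y hx hy => intro u v; simp only [map_add]; rw [add_add_add_comm, hx, hy, add_zero]
  | smul a x hx => intro u v; simp only [S.ι_smul]; rw [← smul_add, hx, smul_zero]
  | D_mul b y hy =>
    intro u v
    simp only [S.ι_D_mul, map_sub, S.ι_smul]
    rw [eq_neg_of_add_eq_zero_left (hy u v), mul_neg]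
    abel

/-- `[d, T]` for `T` of degree `-(k + 1)`; for `T = i_γ` this is `L_γ`. -/
noncomputable def lie (k : ℕ) (T : Module.End ℤ (ExteriorAlgebra A Ω[A⁄R])) :
    Module.End ℤ (ExteriorAlgebra A Ω[A⁄R]) :=
  S.d * T + (-1 : ℤ) ^ k • (T * S.d)

theorem lie_ι_mul_ι_sub (u v : Derivation R A A) :
    S.lie 0 (S.ι u) * S.ι v - S.ι v * S.lie 0 (S.ι u) = S.ι ⁅u, v⁆ := by
  suffices h : ∀ x u v, S.d (S.ι u (S.ι v x)) + S.ι u (S.d (S.ι v x))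
      - (S.ι v (S.d (S.ι u x)) + S.ι v (S.ι u (S.d x))) = S.ι ⁅u, v⁆ x from
    LinearMap.ext fun x => by
      simpa only [lie, LinearMap.sub_apply, LinearMap.add_apply, Module.End.mul_apply, map_add,
        pow_zero, one_smul] using h x u v
  intro x
  induction x using KaehlerDifferential.exteriorAlgebra_induction with
  | algebraMap a => intro u v; simp [S.ι_algebraMap, S.d_algebraMap, S.ι_D]
  | add x y hx hy => intro u v; simp only [map_add]; rw [← hx, ← hy]; abel
  | smul a x hx =>
    intro u v
    simp only [S.ι_smul, S.d_smul, map_add, map_sub, S.ι_D_mul, ← hx, smul_add, smul_sub]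
    abel
  | D_mul b y hy =>
    intro u v
    simp only [S.ι_D_mul, S.d_D_mul, map_sub, map_neg, S.ι_smul, S.d_smul, map_add,
      Derivation.commutator_apply, sub_smul, ← hy, mul_add, mul_sub]
    abel

noncomputable def ιList (l : List (Derivation R A A)) : Module.End ℤ (ExteriorAlgebra A Ω[A⁄R]) :=
  (l.map S.ι).prod

@[simp] theorem ιList_nil : S.ιList [] = 1 := rfl

@[simp] theorem ιList_cons (u : Derivation R A A) (l : List (Derivation R A A)) :
    S.ιList (u :: l) = S.ι u * S.ιList l := by
  simp [ιList]

@[simp] theorem ιList_append (l₁ l₂ : List (Derivation R A A)) :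
    S.ιList (l₁ ++ l₂) = S.ιList l₁ * S.ιList l₂ := by
  simp [ιList]

theorem ιList_mul_ι (l : List (Derivation R A A)) (v : Derivation R A A) :
    S.ιList l * S.ι v = (-1 : ℤ) ^ l.length • (S.ι v * S.ιList l) := by
  induction l with
  | nil => simp
  | cons u l ih =>
    rw [ιList_cons, mul_assoc, ih, mul_smul_comm, ← mul_assoc, S.ι_mul_ι_comm, List.length_cons,
      pow_succ, mul_comm, mul_smul]
    simp [mul_assoc]

theorem lie_succ_ι_mul (k : ℕ) (u : Derivation R A A)
    (T : Module.End ℤ (ExteriorAlgebra A Ω[A⁄R])) :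
    S.lie (k + 1) (S.ι u * T) = S.lie 0 (S.ι u) * T - S.ι u * S.lie k T := by
  simp only [lie, pow_succ, pow_zero, one_smul, mul_neg_one, neg_smul, add_mul, mul_add,
    mul_smul_comm, mul_assoc]
  abel

/-- The contraction with `[u₀ ∧ ⋯, v₀ ∧ ⋯]_SN` for `l = [u₀, …]` and `m = [v₀, …]`. -/
noncomputable def ιSN (l m : List (Derivation R A A)) : Module.End ℤ (ExteriorAlgebra A Ω[A⁄R]) :=
  ∑ i ∈ Finset.range l.length, ∑ j ∈ Finset.range m.length,
    (-1 : ℤ) ^ (i + j) • S.ιList (⁅l.getD i 0, m.getD j 0⁆ :: (l.eraseIdx i ++ m.eraseIdx j))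

@[simp] theorem ιSN_nil_right (l : List (Derivation R A A)) : S.ιSN l [] = 0 := by
  simp [ιSN]

theorem ιSN_singleton (u v : Derivation R A A) : S.ιSN [u] [v] = S.ι ⁅u, v⁆ := by
  simp [ιSN]

theorem ιSN_cons_singleton (u v : Derivation R A A) (l : List (Derivation R A A)) :
    S.ιSN (u :: l) [v] = S.ι ⁅u, v⁆ * S.ιList l + S.ι u * S.ιSN l [v] := by
  simp only [ιSN, List.length_cons, List.length_nil, zero_add, Finset.sum_range_one, add_zero,
    List.getD_cons_zero, List.eraseIdx_cons_zero, List.append_nil, Finset.mul_sum]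
  rw [Finset.sum_range_succ', add_comm]
  congr 1
  · simp
  · refine Finset.sum_congr rfl fun i _ => ?_
    simp only [List.getD_cons_succ, List.eraseIdx_cons_succ, ιList_cons]
    rw [← mul_assoc, S.ι_mul_ι_comm, mul_smul_comm, pow_succ, mul_neg_one, neg_smul, neg_mul,
      smul_neg, neg_neg, mul_assoc]

theorem ιSN_cons_right {k : ℕ} (l : List (Derivation R A A)) (hl : l.length = k + 1)
    (v : Derivation R A A) (m : List (Derivation R A A)) :
    S.ιSN l (v :: m) = S.ιSN l [v] * S.ιList m + (-1 : ℤ) ^ k • (S.ι v * S.ιSN l m) := by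
  simp only [ιSN, List.length_cons, List.length_nil, zero_add, Finset.sum_range_one, add_zero,
    Finset.sum_mul, Finset.mul_sum, Finset.smul_sum, ← Finset.sum_add_distrib]
  refine Finset.sum_congr rfl fun i hi => ?_
  rw [Finset.sum_range_succ', add_comm]
  congr 1
  · simp only [add_zero, List.getD_cons_zero, List.eraseIdx_cons_zero, List.append_nil, ιList_cons,
      ιList_append, smul_mul_assoc, mul_assoc]
  · refine Finset.sum_congr rfl fun j _ => ?_
    have hlen : (⁅l.getD i 0, m.getD j 0⁆ :: l.eraseIdx i).length = k + 1 := by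
      simp [List.length_eraseIdx_of_lt (Finset.mem_range.mp hi), hl]
    simp only [List.getD_cons_succ, List.eraseIdx_cons_succ]
    rw [← List.cons_append, ιList_append, ιList_cons _ v, ← mul_assoc, S.ιList_mul_ι, hlen,
      ← List.cons_append, ιList_append]
    simp only [smul_mul_assoc, mul_smul_comm, smul_smul, mul_assoc]
    congr 1
    ring

theorem lie_ιList_mul_ι_sub (l : List (Derivation R A A)) (u v : Derivation R A A) :
    S.lie l.length (S.ιList (u :: l)) * S.ι v
      - (-1 : ℤ) ^ l.length • (S.ι v * S.lie l.length (S.ιList (u :: l)))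
      = (-1 : ℤ) ^ l.length • S.ιSN (u :: l) [v] := by
  induction l generalizing u with
  | nil => simpa [ιSN_singleton] using S.lie_ι_mul_ι_sub u v
  | cons w m ih =>
    have hcomm := sub_eq_iff_eq_add.mp (ih w)
    have hcartan := sub_eq_iff_eq_add.mp (S.lie_ι_mul_ι_sub u v)
    rw [List.length_cons, ιList_cons, S.lie_succ_ι_mul, S.ιSN_cons_singleton]
    rw [sub_mul, mul_assoc, mul_assoc, S.ιList_mul_ι, hcomm]
    simp only [List.length_cons, mul_smul_comm, mul_add, ← mul_assoc, hcartan, S.ι_mul_ι_comm u v]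
    simp only [pow_succ, mul_neg_one, neg_smul, smul_add, smul_sub, smul_neg, add_mul, neg_mul,
      mul_sub, mul_assoc]
    abel

theorem lie_ιList_mul_ιList_sub (l m : List (Derivation R A A)) (u : Derivation R A A) :
    S.lie l.length (S.ιList (u :: l)) * S.ιList m
      - (-1 : ℤ) ^ (l.length * m.length) • (S.ιList m * S.lie l.length (S.ιList (u :: l)))
      = (-1 : ℤ) ^ l.length • S.ιSN (u :: l) m := by
  induction m with
  | nil => simp
  | cons v m ih =>
    have hcomm := sub_eq_iff_eq_add.mp ih
    have hBL := sub_eq_iff_eq_add.mp (S.lie_ιList_mul_ι_sub l u v)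
    rw [ιList_cons _ v, S.ιSN_cons_right (u :: l) rfl, ← mul_assoc, hBL]
    simp only [add_mul, smul_mul_assoc, mul_assoc, hcomm, List.length_cons, Nat.mul_succ, pow_add,
      mul_add, mul_smul_comm, smul_add, smul_smul]
    rcases neg_one_pow_eq_or ℤ l.length with h | h <;> simp only [h] <;> module

theorem lie_mul_d (k : ℕ) (T : Module.End ℤ (ExteriorAlgebra A Ω[A⁄R])) :
    S.lie k T * S.d = (-1 : ℤ) ^ k • (S.d * S.lie k T) := by
  have hdd : ∀ X, S.d * (S.d * X) = 0 := fun X => by rw [← mul_assoc, S.d_mul_d, zero_mul]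
  simp only [lie, add_mul, mul_add, smul_mul_assoc, mul_smul_comm, mul_assoc, S.d_mul_d, hdd,
    mul_zero, smul_zero, add_zero, zero_add, smul_smul, ← pow_add, Even.neg_one_pow ⟨k, rfl⟩,
    one_smul]

theorem lie_mul_lie_sub {k₁ k₂ : ℕ} (P Q X : Module.End ℤ (ExteriorAlgebra A Ω[A⁄R]))
    (h : S.lie k₁ P * Q - (-1 : ℤ) ^ (k₁ * (k₂ + 1)) • (Q * S.lie k₁ P) = (-1 : ℤ) ^ k₁ • X) :
    S.lie k₁ P * S.lie k₂ Q - (-1 : ℤ) ^ (k₁ * k₂) • (S.lie k₂ Q * S.lie k₁ P)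
      = S.lie (k₁ + k₂) X := by
  have hd := S.lie_mul_d k₁ P
  generalize S.lie k₁ P = L at h hd ⊢
  have hd' : S.d * L = (-1 : ℤ) ^ k₁ • (L * S.d) := by
    rw [hd, smul_smul, ← pow_add, Even.neg_one_pow ⟨k₁, rfl⟩, one_smul]
  have e₁ : L * S.lie k₂ Q
      = (-1 : ℤ) ^ k₁ • (S.d * (L * Q)) + (-1 : ℤ) ^ k₂ • (L * Q * S.d) := by
    rw [lie, mul_add, ← mul_assoc, hd, smul_mul_assoc, mul_assoc, mul_smul_comm, mul_assoc]
  have e₂ : S.lie k₂ Q * L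
      = S.d * (Q * L) + ((-1 : ℤ) ^ k₂ * (-1 : ℤ) ^ k₁) • (Q * L * S.d) := by
    rw [lie, add_mul, smul_mul_assoc, mul_assoc Q, hd', mul_smul_comm, smul_smul, mul_assoc,
      mul_assoc]
  rw [e₁, e₂, sub_eq_iff_eq_add.mp h, lie]
  simp only [mul_add, add_mul, mul_smul_comm, smul_mul_assoc, smul_add, smul_smul, Nat.mul_succ,
    pow_add]
  rcases neg_one_pow_eq_or ℤ k₁ with h₁ | h₁ <;> simp only [h₁] <;> module

theorem lie_ιList_mul_lie_ιList_sub {k₁ k₂ : ℕ} (l m : List (Derivation R A A))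
    (hl : l.length = k₁ + 1) (hm : m.length = k₂ + 1) :
    S.lie k₁ (S.ιList l) * S.lie k₂ (S.ιList m)
      - (-1 : ℤ) ^ (k₁ * k₂) • (S.lie k₂ (S.ιList m) * S.lie k₁ (S.ιList l))
      = S.lie (k₁ + k₂) (S.ιSN l m) := by
  obtain ⟨u, l, rfl⟩ := List.exists_cons_of_length_eq_add_one hl
  obtain rfl : l.length = k₁ := by simpa using hl
  exact S.lie_mul_lie_sub _ _ _ (hm ▸ S.lie_ιList_mul_ιList_sub l m u)

end CartanCalculus

end

def schoutenTuple {L : Type*} [Bracket L L] (k₁ i j : ℕ) (u v : ℕ → L) (t : ℕ) : L :=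
  if t = 0 then ⁅u i, v j⁆
  else if t < k₁ + 1 then (if t - 1 < i then u (t - 1) else u t)
  else if t - (k₁ + 1) < j then v (t - (k₁ + 1))
  else v (t - (k₁ + 1) + 1)

theorem List.ofFn_schoutenTuple {L : Type*} [Bracket L L] {k₁ k₂ i j : ℕ} (hi : i < k₁ + 1)
    (hj : j < k₂ + 1) (u v : ℕ → L) :
    List.ofFn (fun t : Fin (k₁ + k₂ + 1) => schoutenTuple k₁ i j u v t)
      = ⁅u i, v j⁆ :: ((List.ofFn fun t : Fin (k₁ + 1) => u t).eraseIdx i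
          ++ (List.ofFn fun t : Fin (k₂ + 1) => v t).eraseIdx j) := by
  apply List.ext_getElem
  · simp [List.length_eraseIdx_of_lt, hi, hj]
  rintro (_ | t) _ _
  · simp [schoutenTuple]
  · simp only [schoutenTuple, List.getElem_ofFn, List.getElem_cons_succ, List.getElem_append,
      List.getElem_eraseIdx]
    simp [List.length_eraseIdx_of_lt, hi]

theorem wedgeDec_induction {R M : Type} [CommRing R] [AddCommGroup M] [Module R M]
    {n : ℕ} {P : ⋀[R]^(n + 1) M → Prop} (zero : P 0) (add : ∀ x y, P x → P y → P (x + y))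
    (wedge : ∀ u : ℕ → M, P (wedgeDec R M (n + 1) fun t => u t)) (x : ⋀[R]^(n + 1) M) : P x := by
  suffices h : ∀ a : R, P (a • x) by simpa using h 1
  have hx : x ∈ Submodule.span R (Set.range (exteriorPower.ιMulti R (n + 1))) := by
    rw [exteriorPower.ιMulti_span]; trivial
  induction hx using Submodule.span_induction with
  | mem _ hx =>
    obtain ⟨u, rfl⟩ := hx
    intro a
    -- `a • (u₀ ∧ u₁ ∧ ⋯) = (a • u₀) ∧ u₁ ∧ ⋯`
    have h := wedge (Function.extend Fin.val (Function.update u 0 (a • u 0)) 0)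
    simp only [Fin.val_injective.extend_apply] at h
    change P (exteriorPower.ιMulti R (n + 1) _) at h
    simpa using h
  | zero => simpa using zero
  | add x y _ _ hx hy => intro a; rw [smul_add]; exact add _ _ (hx a) (hy a)
  | smul b x _ hx => intro a; rw [smul_smul]; exact hx _

namespace CartanCalculus

variable {R A : Type} [CommRing R] [CommRing A] [Algebra R A] (S : CartanCalculus R A)

theorem ιList_apply (l : List (Derivation R A A)) (x : ExteriorAlgebra A Ω[A⁄R]) :
    S.ιList l x = (l.map fun u => ⇑(S.ι u)).foldr (fun f y => f y) x := by
  induction l with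
  | nil => rfl
  | cons u l ih => simp [ih]

theorem lie_add (k : ℕ) (T T' : Module.End ℤ (ExteriorAlgebra A Ω[A⁄R])) :
    S.lie k (T + T') = S.lie k T + S.lie k T' := by
  simp only [lie, mul_add, add_mul, smul_add]
  abel

theorem ιSN_ofFn {k₁ k₂ : ℕ} (u v : ℕ → Derivation R A A) :
    S.ιSN (List.ofFn fun t : Fin (k₁ + 1) => u t) (List.ofFn fun t : Fin (k₂ + 1) => v t)
      = ∑ i ∈ Finset.range (k₁ + 1), ∑ j ∈ Finset.range (k₂ + 1), (-1 : ℤ) ^ (i + j) •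
          S.ιList (List.ofFn fun t : Fin (k₁ + k₂ + 1) => schoutenTuple k₁ i j u v t) := by
  have getD_ofFn : ∀ {n i} (w : ℕ → Derivation R A A), i < n →
      (List.ofFn fun t : Fin n => w t).getD i 0 = w i := fun w hi => by
    rw [List.getD_eq_getElem _ _ (by simpa using hi), List.getElem_ofFn]
  simp only [ιSN, List.length_ofFn]
  refine Finset.sum_congr rfl fun i hi => Finset.sum_congr rfl fun j hj => ?_
  rw [Finset.mem_range] at hi hj
  rw [List.ofFn_schoutenTuple hi hj, getD_ofFn u hi, getD_ofFn v hj]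

theorem map_add_right_of_wedgeDec {k : ℕ}
    {IP : ⋀[A]^(k + 1) (Derivation R A A) → ExteriorAlgebra A Ω[A⁄R] → ExteriorAlgebra A Ω[A⁄R]}
    (hadd : ∀ γ γ' x, IP (γ + γ') x = IP γ x + IP γ' x)
    (hwedge : ∀ (u : ℕ → Derivation R A A) x,
      IP (wedgeDec A _ (k + 1) fun t => u t) x = S.ιList (List.ofFn fun t : Fin (k + 1) => u t) x)
    (γ : ⋀[A]^(k + 1) (Derivation R A A)) (x y : ExteriorAlgebra A Ω[A⁄R]) :
    IP γ (x + y) = IP γ x + IP γ y := by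
  have hzero : ∀ x, IP 0 x = 0 := fun x => (AddMonoidHom.mk' (IP · x) (hadd · · x)).map_zero
  induction γ using wedgeDec_induction with
  | zero => simp [hzero]
  | add γ γ' h h' => rw [hadd, hadd, hadd, h, h']; abel
  | wedge u => simp [hwedge]

noncomputable def contractionHom {k : ℕ}
    (IP : ⋀[A]^(k + 1) (Derivation R A A) → ExteriorAlgebra A Ω[A⁄R] → ExteriorAlgebra A Ω[A⁄R])
    (hadd : ∀ γ γ' x, IP (γ + γ') x = IP γ x + IP γ' x)
    (hwedge : ∀ (u : ℕ → Derivation R A A) x,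
      IP (wedgeDec A _ (k + 1) fun t => u t) x = S.ιList (List.ofFn fun t : Fin (k + 1) => u t) x) :
    ⋀[A]^(k + 1) (Derivation R A A) →+ Module.End ℤ (ExteriorAlgebra A Ω[A⁄R]) :=
  AddMonoidHom.mk'
    (fun γ => (AddMonoidHom.mk' (IP γ) (S.map_add_right_of_wedgeDec hadd hwedge γ)).toIntLinearMap)
    fun γ γ' => LinearMap.ext (hadd γ γ')

theorem lie_mul_lie_sub_of_wedgeDec {k₁ k₂ : ℕ}
    (ip : ∀ k, ⋀[A]^(k + 1) (Derivation R A A) →+ Module.End ℤ (ExteriorAlgebra A Ω[A⁄R]))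
    (hip : ∀ k (u : ℕ → Derivation R A A),
      ip k (wedgeDec A _ (k + 1) fun t => u t) = S.ιList (List.ofFn fun t : Fin (k + 1) => u t))
    (sn : ⋀[A]^(k₁ + 1) (Derivation R A A) →+ ⋀[A]^(k₂ + 1) (Derivation R A A) →+
      ⋀[A]^(k₁ + k₂ + 1) (Derivation R A A))
    (hsn : ∀ u v : ℕ → Derivation R A A,
      ip (k₁ + k₂) (sn (wedgeDec A _ (k₁ + 1) fun t => u t) (wedgeDec A _ (k₂ + 1) fun t => v t))
        = S.ιSN (List.ofFn fun t : Fin (k₁ + 1) => u t) (List.ofFn fun t : Fin (k₂ + 1) => v t))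
    (γ₁ : ⋀[A]^(k₁ + 1) (Derivation R A A)) (γ₂ : ⋀[A]^(k₂ + 1) (Derivation R A A)) :
    S.lie k₁ (ip k₁ γ₁) * S.lie k₂ (ip k₂ γ₂)
      - (-1 : ℤ) ^ (k₁ * k₂) • (S.lie k₂ (ip k₂ γ₂) * S.lie k₁ (ip k₁ γ₁))
      = S.lie (k₁ + k₂) (ip (k₁ + k₂) (sn γ₁ γ₂)) := by
  induction γ₁ using wedgeDec_induction with
  | zero => simp [lie]
  | add γ γ' h h' =>
    simp only [map_add, AddMonoidHom.add_apply, S.lie_add, add_mul, mul_add, smul_add, ← h, ← h']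
    abel
  | wedge u =>
    induction γ₂ using wedgeDec_induction with
    | zero => simp [lie]
    | add γ γ' h h' =>
      simp only [map_add, S.lie_add, add_mul, mul_add, smul_add, ← h, ← h']
      abel
    | wedge v =>
      rw [hip, hip, hsn]
      exact S.lie_ιList_mul_lie_ιList_sub _ _ (List.length_ofFn) (List.length_ofFn)

end CartanCalculus

theorem lie_derivative_graded_module_general (d : ℕ)
    -- the de Rham differential
    (dR : FormAlg d → FormAlg d)
    (hdR_add : ∀ x y, dR (x + y) = dR x + dR y)
    (hdR_D : ∀ a : PA d, dR (algebraMap (PA d) (FormAlg d) a)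
      = ExteriorAlgebra.ι (PA d) (KaehlerDifferential.D ℝ (PA d) a))
    (hdR_sq : ∀ x, dR (dR x) = 0)
    (hdR_leib : ∀ (n : ℕ) (x y : FormAlg d), x ∈ ⋀[PA d]^n (KD d) →
      dR (x * y) = dR x * y + ((-1 : ℤ) ^ n) • (x * dR y))
    -- contraction with a derivation
    (ctr : DerA d → FormAlg d → FormAlg d)
    (hctr_add : ∀ u x y, ctr u (x + y) = ctr u x + ctr u y)
    (hctr_smul : ∀ u (a : PA d) x, ctr u (a • x) = a • ctr u x)
    (hctr_d : ∀ (u : DerA d) (a : PA d),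
      ctr u (ExteriorAlgebra.ι (PA d) (KaehlerDifferential.D ℝ (PA d) a))
        = algebraMap (PA d) (FormAlg d) (u a))
    (hctr_leib : ∀ (u : DerA d) (n : ℕ) (x y : FormAlg d), x ∈ ⋀[PA d]^n (KD d) →
      ctr u (x * y) = ctr u x * y + ((-1 : ℤ) ^ n) • (x * ctr u y))
    -- contraction with a polyvector field
    (IP : ∀ m : ℕ, PolyVec d m → FormAlg d → FormAlg d)
    (hIP_add : ∀ m γ γ' x, IP m (γ + γ') x = IP m γ x + IP m γ' x)
    (hIP_dec : ∀ (m : ℕ) (u : ℕ → DerA d) (x : FormAlg d),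
      IP m (wedgeDec (PA d) (DerA d) m fun t : Fin m => u t) x
        = (List.ofFn fun t : Fin m => ctr (u t)).foldr (fun f y => f y) x)
    -- the Schouten--Nijenhuis bracket
    (k₁ k₂ : ℕ)
    (SN : PolyVec d (k₁+1) → PolyVec d (k₂+1) → PolyVec d (k₁+k₂+1))
    (hSNadd₁ : ∀ x y z, SN (x + y) z = SN x z + SN y z)
    (hSNadd₂ : ∀ x y z, SN x (y + z) = SN x y + SN x z)
    (hSN : ∀ (u v : ℕ → DerA d),
      SN (wedgeDec (PA d) (DerA d) (k₁+1) fun t : Fin (k₁+1) => u t)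
         (wedgeDec (PA d) (DerA d) (k₂+1) fun t : Fin (k₂+1) => v t)
        = ∑ i ∈ Finset.range (k₁+1), ∑ j ∈ Finset.range (k₂+1),
            ((-1 : ℤ) ^ (i + j)) •
              wedgeDec (PA d) (DerA d) (k₁+k₂+1)
                (fun t : Fin (k₁+k₂+1) =>
                  if (t : ℕ) = 0 then ⁅u i, v j⁆
                  else if (t : ℕ) < k₁ + 1 then
                    (if (t : ℕ) - 1 < i then u ((t : ℕ) - 1) else u (t : ℕ))
                  else
                    (if (t : ℕ) - (k₁ + 1) < j then v ((t : ℕ) - (k₁ + 1))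
                     else v ((t : ℕ) - (k₁ + 1) + 1))))
    (γ₁ : PolyVec d (k₁+1)) (γ₂ : PolyVec d (k₂+1)) (x : FormAlg d) :
    -- `L_{γ₁}(L_{γ₂} x) - (-1)^{k₁ k₂} L_{γ₂}(L_{γ₁} x) = L_{[γ₁,γ₂]_SN} x`
    (fun y => dR (IP (k₁+1) γ₁ y) + ((-1 : ℤ) ^ k₁) • IP (k₁+1) γ₁ (dR y))
        ((fun y => dR (IP (k₂+1) γ₂ y) + ((-1 : ℤ) ^ k₂) • IP (k₂+1) γ₂ (dR y)) x)
      - ((-1 : ℤ) ^ (k₁ * k₂)) •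
        (fun y => dR (IP (k₂+1) γ₂ y) + ((-1 : ℤ) ^ k₂) • IP (k₂+1) γ₂ (dR y))
          ((fun y => dR (IP (k₁+1) γ₁ y) + ((-1 : ℤ) ^ k₁) • IP (k₁+1) γ₁ (dR y)) x)
      = dR (IP (k₁+k₂+1) (SN γ₁ γ₂) x)
        + ((-1 : ℤ) ^ (k₁ + k₂)) • IP (k₁+k₂+1) (SN γ₁ γ₂) (dR x) := by
  let S : CartanCalculus ℝ (PA d) :=
    { d := (AddMonoidHom.mk' dR hdR_add).toIntLinearMap
      ι := fun u => (AddMonoidHom.mk' (ctr u) (hctr_add u)).toIntLinearMap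
      d_algebraMap := hdR_D, d_d := hdR_sq, d_mul := hdR_leib
      ι_smul := hctr_smul, ι_D := hctr_d, ι_mul := hctr_leib }
  have hwedge : ∀ m (u : ℕ → DerA d) x, IP m (wedgeDec _ _ m fun t => u t) x
      = S.ιList (List.ofFn fun t : Fin m => u t) x := fun m u x => by
    rw [hIP_dec, S.ιList_apply, List.map_ofFn]; rfl
  let ip k := S.contractionHom (IP (k + 1)) (hIP_add (k + 1)) (hwedge (k + 1))
  have hip : ∀ k (u : ℕ → DerA d), ip k (wedgeDec _ _ (k + 1) fun t => u t)
      = S.ιList (List.ofFn fun t : Fin (k + 1) => u t) := fun k u => LinearMap.ext (hwedge _ u)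
  let sn : PolyVec d (k₁ + 1) →+ PolyVec d (k₂ + 1) →+ PolyVec d (k₁ + k₂ + 1) :=
    AddMonoidHom.mk' (fun γ => AddMonoidHom.mk' (SN γ) (hSNadd₂ γ))
      fun γ γ' => AddMonoidHom.ext (hSNadd₁ γ γ')
  have hsn : ∀ u v : ℕ → DerA d, ip (k₁ + k₂) (sn (wedgeDec _ _ (k₁ + 1) fun t => u t)
      (wedgeDec _ _ (k₂ + 1) fun t => v t))
        = S.ιSN (List.ofFn fun t : Fin (k₁ + 1) => u t)
            (List.ofFn fun t : Fin (k₂ + 1) => v t) := by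
    intro u v
    rw [S.ιSN_ofFn]
    simp only [sn, AddMonoidHom.mk'_apply, hSN, map_sum, map_zsmul]
    exact Finset.sum_congr rfl fun i _ => Finset.sum_congr rfl fun j _ =>
      congrArg _ (hip _ (schoutenTuple k₁ i j u v))
  exact congr($(S.lie_mul_lie_sub_of_wedgeDec ip hip sn hsn γ₁ γ₂) x)

/-- Let `A = ℝ[x₁,…,x_d]`, `Ω¹ = Ω_{A/ℝ}`, `Ω^n = Λ^n_A Ω¹`, with the
de Rham differential `dR` (the unique square-zero graded-Leibniz extension of the
universal derivation), contractions `ι_u` with derivations (the `A`-linear odd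
antiderivations with `ι_u(da) = u(a)`), contractions `i_γ` with polyvector fields
(extended `A`-linearly from `i_{u₀∧…∧u_k} = ι_{u₀}∘…∘ι_{u_k}`), Lie derivatives
`L_γ = d∘i_γ + (-1)^k i_γ∘d` for `γ ∈ Λ^{k+1}_A Der(A)`, and the Schouten–Nijenhuis
bracket `[·,·]_SN` (biadditive, extending the commutator of derivations, with the
standard values on decomposables).  Then the assignment `γ ↦ L_γ` makes `Ω^•` a graded
Lie algebra module over the polyvector fields:
`L_{γ₁}∘L_{γ₂} - (-1)^{k₁k₂} L_{γ₂}∘L_{γ₁} = L_{[γ₁,γ₂]_SN}` as operators on `Ω^•`. -/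
theorem lie_derivative_graded_module (d : ℕ)
    -- the de Rham differential
    (dR : FormAlg d → FormAlg d)
    (hdR_add : ∀ x y, dR (x + y) = dR x + dR y)
    (hdR_deg : ∀ (n : ℕ) (x : FormAlg d), x ∈ ⋀[PA d]^n (KD d) →
      dR x ∈ ⋀[PA d]^(n+1) (KD d))
    (hdR_D : ∀ a : PA d, dR (algebraMap (PA d) (FormAlg d) a)
      = ExteriorAlgebra.ι (PA d) (KaehlerDifferential.D ℝ (PA d) a))
    (hdR_sq : ∀ x, dR (dR x) = 0)
    (hdR_leib : ∀ (n : ℕ) (x y : FormAlg d), x ∈ ⋀[PA d]^n (KD d) →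
      dR (x * y) = dR x * y + ((-1 : ℤ) ^ n) • (x * dR y))
    -- contraction with a derivation
    (ctr : DerA d → FormAlg d → FormAlg d)
    (hctr_add : ∀ u x y, ctr u (x + y) = ctr u x + ctr u y)
    (hctr_smul : ∀ u (a : PA d) x, ctr u (a • x) = a • ctr u x)
    (hctr_d : ∀ (u : DerA d) (a : PA d),
      ctr u (ExteriorAlgebra.ι (PA d) (KaehlerDifferential.D ℝ (PA d) a))
        = algebraMap (PA d) (FormAlg d) (u a))
    (hctr_leib : ∀ (u : DerA d) (n : ℕ) (x y : FormAlg d), x ∈ ⋀[PA d]^n (KD d) →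
      ctr u (x * y) = ctr u x * y + ((-1 : ℤ) ^ n) • (x * ctr u y))
    -- contraction with a polyvector field
    (IP : ∀ m : ℕ, PolyVec d m → FormAlg d → FormAlg d)
    (hIP_add : ∀ m γ γ' x, IP m (γ + γ') x = IP m γ x + IP m γ' x)
    (hIP_smul : ∀ m (a : PA d) γ x, IP m (a • γ) x = a • IP m γ x)
    (hIP_dec : ∀ (m : ℕ) (u : ℕ → DerA d) (x : FormAlg d),
      IP m (wedgeDec (PA d) (DerA d) m fun t : Fin m => u t) x
        = (List.ofFn fun t : Fin m => ctr (u t)).foldr (fun f y => f y) x)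
    -- the Schouten--Nijenhuis bracket
    (k₁ k₂ : ℕ)
    (SN : PolyVec d (k₁+1) → PolyVec d (k₂+1) → PolyVec d (k₁+k₂+1))
    (hSNadd₁ : ∀ x y z, SN (x + y) z = SN x z + SN y z)
    (hSNadd₂ : ∀ x y z, SN x (y + z) = SN x y + SN x z)
    (hSN : ∀ (u v : ℕ → DerA d),
      SN (wedgeDec (PA d) (DerA d) (k₁+1) fun t : Fin (k₁+1) => u t)
         (wedgeDec (PA d) (DerA d) (k₂+1) fun t : Fin (k₂+1) => v t)
        = ∑ i ∈ Finset.range (k₁+1), ∑ j ∈ Finset.range (k₂+1),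
            ((-1 : ℤ) ^ (i + j)) •
              wedgeDec (PA d) (DerA d) (k₁+k₂+1)
                (fun t : Fin (k₁+k₂+1) =>
                  if (t : ℕ) = 0 then ⁅u i, v j⁆
                  else if (t : ℕ) < k₁ + 1 then
                    (if (t : ℕ) - 1 < i then u ((t : ℕ) - 1) else u (t : ℕ))
                  else
                    (if (t : ℕ) - (k₁ + 1) < j then v ((t : ℕ) - (k₁ + 1))
                     else v ((t : ℕ) - (k₁ + 1) + 1))))
    (γ₁ : PolyVec d (k₁+1)) (γ₂ : PolyVec d (k₂+1)) (x : FormAlg d) :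
    -- `L_{γ₁}(L_{γ₂} x) - (-1)^{k₁ k₂} L_{γ₂}(L_{γ₁} x) = L_{[γ₁,γ₂]_SN} x`
    (fun y => dR (IP (k₁+1) γ₁ y) + ((-1 : ℤ) ^ k₁) • IP (k₁+1) γ₁ (dR y))
        ((fun y => dR (IP (k₂+1) γ₂ y) + ((-1 : ℤ) ^ k₂) • IP (k₂+1) γ₂ (dR y)) x)
      - ((-1 : ℤ) ^ (k₁ * k₂)) •
        (fun y => dR (IP (k₂+1) γ₂ y) + ((-1 : ℤ) ^ k₂) • IP (k₂+1) γ₂ (dR y))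
          ((fun y => dR (IP (k₁+1) γ₁ y) + ((-1 : ℤ) ^ k₁) • IP (k₁+1) γ₁ (dR y)) x)
      = dR (IP (k₁+k₂+1) (SN γ₁ γ₂) x)
        + ((-1 : ℤ) ^ (k₁ + k₂)) • IP (k₁+k₂+1) (SN γ₁ γ₂) (dR x) :=
  lie_derivative_graded_module_general d dR hdR_add hdR_D hdR_sq hdR_leib ctr hctr_add hctr_smul
    hctr_d hctr_leib IP hIP_add hIP_dec k₁ k₂ SN hSNadd₁ hSNadd₂ hSN γ₁ γ₂ x
end
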